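/- arXiv:1312.2920 — 6 statements merged into one kernel-verified Lean document; each statement's English description precedes it below -/
import Mathlib

section
/- Let H be a complex Hilbert space and let Q_1, …, Q_{k−1}, R_1, R_2, Q_{k+1}, …, Q_m be orthogonal projections on H satisfying Q_1 ≤ … ≤ Q_{k−1} ≤ R_i ≤ Q_{k+1} ≤ … ≤ Q_m for i = 1, 2. If this family of projections is irreducible, then dim H ≤ 2; moreover, if dim H = 2 then Q_1 = … = Q_{k−1} = 0, Q_{k+1} = … = Q_m = I, and there exist τ ∈ (0,1) and an orthonormal basis of H in which R_1 has matrix [[1,0],[0,0]] and R_2 has matrix [[τ, √(τ(1−τ))],[√(τ(1−τ)), 1−τ]]. -/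
/-!
Each `Q j` (`j ≠ k`) is comparable with every projection of the family, hence commutes with all
of them, and irreducibility forces `Q j ∈ {0, 1}`; what remains is an irreducible pair of
projections `P = R 0`, `Q = R 1`. The self-adjoint operator `(P - Q)²` commutes with `P` and `Q`,
so a Schur argument through its positive and negative parts shows that it is a real scalar `r`;
hence `PQP = τ P` with `τ = 1 - r`. For a unit vector `e` with `P e = e`, the span of `e` and `Q e`
is then invariant, so `dim H ≤ 2`. In dimension 2, orthonormalising `e, Q e` gives the standard
form, since `⟪e, Q e⟫ = τ` and `‖Q e - τ e‖² = τ (1 - τ)`.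
-/

section StarRing

variable {A : Type*} [Ring A] [StarRing A]

theorem IsSelfAdjoint.commute_of_mul_eq_left {p q : A} (hp : IsSelfAdjoint p)
    (hq : IsSelfAdjoint q) (h : p * q = p) : Commute p q := by
  have h' : q * p = p := by simpa [hp.star_eq, hq.star_eq] using congrArg star h
  exact h.trans h'.symm

end StarRing

section Ring

variable {A : Type*} [Ring A]

theorem IsIdempotentElem.commute_sub_mul_sub {p q : A} (hp : IsIdempotentElem p)
    (hq : IsIdempotentElem q) : Commute ((p - q) * (p - q)) p := by
  have hp' : p * p = p := hp
  have hq' : q * q = q := hq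
  show (p - q) * (p - q) * p = p * ((p - q) * (p - q))
  simp only [sub_mul, mul_sub, mul_assoc, hp', hq']
  simp only [← mul_assoc, hp']
  abel

theorem IsIdempotentElem.mul_sub_mul_sub_mul {p q : A} (hp : IsIdempotentElem p)
    (hq : IsIdempotentElem q) : p * ((p - q) * (p - q)) * p = p - p * q * p := by
  have hp' : p * p = p := hp
  have hq' : q * q = q := hq
  simp only [sub_mul, mul_sub, mul_assoc, hp', hq']
  simp only [← mul_assoc, hp']
  abel

theorem IsIdempotentElem.mul_mul_eq_smul [Algebra ℝ A] {p q : A}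
    (hp : IsIdempotentElem p) (hq : IsIdempotentElem q) {r : ℝ}
    (hr : (p - q) * (p - q) = algebraMap ℝ A r) : p * q * p = (1 - r) • p := by
  have h := hp.mul_sub_mul_sub_mul hq
  rw [hr, ← Algebra.commutes, mul_assoc, hp.eq, ← Algebra.smul_def] at h
  rw [sub_smul, one_smul, h]
  abel

end Ring

section

variable {H : Type*} [NormedAddCommGroup H] [InnerProductSpace ℂ H]

def IsIrreducibleFamily (S : Set (H →L[ℂ] H)) : Prop :=
  ∀ K : Submodule ℂ H, IsClosed (K : Set H) → (∀ T ∈ S, ∀ x ∈ K, T x ∈ K) → K = ⊥ ∨ K = ⊤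

namespace IsIrreducibleFamily

variable {S : Set (H →L[ℂ] H)}

theorem ker_eq_bot_or_eq_top (hS : IsIrreducibleFamily S) {F : H →L[ℂ] H}
    (hF : ∀ T ∈ S, Commute F T) : F.ker = ⊥ ∨ F.ker = ⊤ := by
  refine hS _ F.isClosed_ker fun T hT x hx => ?_
  simp only [LinearMap.mem_ker, ContinuousLinearMap.coe_coe] at hx ⊢
  rw [← mul_apply_eq_comp, (hF T hT).eq, mul_apply_eq_comp, hx, map_zero]

theorem eq_zero_or_eq_one (hS : IsIrreducibleFamily S) {P : H →L[ℂ] H}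
    (hP : IsIdempotentElem P) (hPS : ∀ T ∈ S, Commute P T) : P = 0 ∨ P = 1 := by
  have hPP (x : H) : P (P x) = P x := congrArg (· x) hP.eq
  have hker (x : H) : x ∈ (1 - P).ker ↔ P x = x := by
    rw [LinearMap.mem_ker, ContinuousLinearMap.coe_coe, sub_apply,
      one_apply_eq_self, sub_eq_zero, eq_comm]
  rcases hS.ker_eq_bot_or_eq_top (F := 1 - P) fun T hT => (Commute.one_left T).sub_left (hPS T hT)
    with h | h
  · left
    ext x
    exact (Submodule.mem_bot ℂ).mp (h ▸ (hker (P x)).mpr (hPP x))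
  · right
    ext x
    exact (hker x).mp (h ▸ Submodule.mem_top)

theorem mono {S' : Set (H →L[ℂ] H)} (hS : IsIrreducibleFamily S) (hSS' : S ⊆ S') :
    IsIrreducibleFamily S' :=
  fun K hK hinv => hS K hK fun T hT => hinv T (hSS' hT)

theorem of_union {S' : Set (H →L[ℂ] H)} (hS : IsIrreducibleFamily (S ∪ S'))
    (hS' : ∀ T ∈ S', T = 0 ∨ T = 1) : IsIrreducibleFamily S := by
  refine fun K hK hinv => hS K hK fun T hT x hx => ?_
  rcases hT with hT | hT
  · exact hinv T hT x hx
  · rcases hS' T hT with rfl | rfl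
    exacts [K.zero_mem, hx]

theorem finrank_le_card {ι : Type*} [Fintype ι] (hS : IsIrreducibleFamily S) {v : ι → H}
    (hv : v ≠ 0) (hSv : ∀ T ∈ S, ∀ i, T (v i) ∈ Submodule.span ℂ (Set.range v)) :
    FiniteDimensional ℂ H ∧ Module.finrank ℂ H ≤ Fintype.card ι := by
  set K := Submodule.span ℂ (Set.range v)
  have : FiniteDimensional ℂ K := FiniteDimensional.span_of_finite ℂ (Set.finite_range v)
  have hK : K = ⊤ := by
    refine (hS K (Submodule.closed_of_finiteDimensional K) fun T hT x hx => ?_).resolve_left ?_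
    · refine (Submodule.span_le (p := K.comap (T : H →ₗ[ℂ] H))).mpr ?_ hx
      rintro _ ⟨i, rfl⟩
      exact hSv T hT i
    · obtain ⟨i, hi⟩ := Function.ne_iff.mp hv
      intro h
      have : v i ∈ K := Submodule.subset_span (Set.mem_range_self i)
      exact hi (by simpa [h] using this)
  refine ⟨Module.Finite.equiv (LinearEquiv.ofTop K hK), ?_⟩
  rw [← (LinearEquiv.ofTop K hK).finrank_eq]
  exact finrank_range_le_card v

theorem finrank_le_one (hS : IsIrreducibleFamily S) (hS01 : ∀ T ∈ S, T = 0 ∨ T = 1) :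
    FiniteDimensional ℂ H ∧ Module.finrank ℂ H ≤ 1 := by
  rcases subsingleton_or_nontrivial H with hH | hH
  · exact ⟨inferInstance, by simp [Module.finrank_zero_of_subsingleton]⟩
  obtain ⟨x, hx⟩ := exists_ne (0 : H)
  refine hS.finrank_le_card (v := ![x]) (by simpa using hx) fun T hT i => ?_
  rcases hS01 T hT with rfl | rfl <;> simp [Submodule.mem_span_singleton_self]

theorem finrank_le_one_of_eq_zero {P Q : H →L[ℂ] H} (hQ : IsIdempotentElem Q)
    (hS : IsIrreducibleFamily {P, Q}) (hP0 : P = 0) :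
    FiniteDimensional ℂ H ∧ Module.finrank ℂ H ≤ 1 := by
  have hQ01 : Q = 0 ∨ Q = 1 := hS.eq_zero_or_eq_one hQ <| by
    rintro T (rfl | rfl)
    exacts [hP0 ▸ Commute.zero_right Q, Commute.refl T]
  exact hS.finrank_le_one <| by
    rintro T (rfl | rfl)
    exacts [Or.inl hP0, hQ01]

end IsIrreducibleFamily

def IsStandardPair (P Q : H →L[ℂ] H) (τ : ℝ) (b : OrthonormalBasis (Fin 2) ℂ H) : Prop :=
  P (b 0) = b 0 ∧ P (b 1) = 0 ∧
    Q (b 0) = (τ : ℂ) • b 0 + ((√(τ * (1 - τ)) : ℝ) : ℂ) • b 1 ∧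
    Q (b 1) = ((√(τ * (1 - τ)) : ℝ) : ℂ) • b 0 + ((1 - τ : ℝ) : ℂ) • b 1

namespace IsStandardPair

variable {P Q : H →L[ℂ] H} {τ : ℝ} {b : OrthonormalBasis (Fin 2) ℂ H}

theorem left_ne_zero (h : IsStandardPair P Q τ b) : P ≠ 0 := fun hP =>
  b.orthonormal.ne_zero 0 (by simpa [hP] using h.1.symm)

theorem left_ne_one (h : IsStandardPair P Q τ b) : P ≠ 1 := fun hP =>
  b.orthonormal.ne_zero 1 (by simpa [hP] using h.2.1)

end IsStandardPair

theorem exists_isStandardPair_of_finrank_eq_two [FiniteDimensional ℂ H]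
    (hH : Module.finrank ℂ H = 2) {P Q : H →L[ℂ] H} {τ : ℝ} {e w : H}
    (he : ‖e‖ = 1) (hw : w ≠ 0) (hew : inner ℂ e w = 0) (hwτ : ‖w‖ ^ 2 = τ * (1 - τ))
    (hPe : P e = e) (hPw : P w = 0) (hQe : Q e = (τ : ℂ) • e + w)
    (hQw : Q w = (1 - (τ : ℂ)) • Q e) :
    0 < τ ∧ τ < 1 ∧ ∃ b : OrthonormalBasis (Fin 2) ℂ H, IsStandardPair P Q τ b := by
  have hwpos : 0 < ‖w‖ := norm_pos_iff.mpr hw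
  obtain ⟨hτ0, hτ1⟩ : 0 < τ ∧ 0 < 1 - τ :=
    (pos_and_pos_or_neg_and_neg_of_mul_pos (hwτ ▸ pow_pos hwpos 2)).resolve_right
      fun h => by linarith [h.1, h.2]
  refine ⟨hτ0, by linarith, ?_⟩
  have hsqrt : √(τ * (1 - τ)) = ‖w‖ := by rw [← hwτ, Real.sqrt_sq hwpos.le]
  set f : H := (‖w‖⁻¹ : ℂ) • w with hf
  have hwf : w = (‖w‖ : ℂ) • f := by
    rw [hf, smul_smul, mul_inv_cancel₀ (by exact_mod_cast hwpos.ne'), one_smul]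
  have hfn : ‖f‖ = 1 := norm_smul_inv_norm hw
  have hef : inner ℂ e f = 0 := by rw [hf, inner_smul_right, hew, mul_zero]
  have hon : Orthonormal ℂ ![e, f] := by
    rw [orthonormal_iff_ite]
    intro i j
    fin_cases i <;> fin_cases j <;>
      simp [he, hfn, hef, inner_eq_zero_symm.mp hef, inner_self_eq_norm_sq_to_K]
  let b : OrthonormalBasis (Fin 2) ℂ H :=
    .mk hon (hon.linearIndependent.span_eq_top_of_card_eq_finrank' (by simp [hH])).ge
  refine ⟨b, ?_, ?_, ?_, ?_⟩ <;> simp only [b, OrthonormalBasis.coe_mk, Matrix.cons_val_zero,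
    Matrix.cons_val_one, hsqrt]
  · exact hPe
  · rw [hf, map_smul, hPw, smul_zero]
  · rw [hQe, ← hwf]
  · have hwτ' : (‖w‖ : ℂ) ^ 2 = τ * (1 - τ) := by exact_mod_cast hwτ
    have hw0 : (‖w‖ : ℂ) ≠ 0 := by exact_mod_cast hwpos.ne'
    rw [hf, map_smul, hQw, hQe]
    match_scalars
    · field_simp
      linear_combination -hwτ'
    · ring

variable [CompleteSpace H]

theorem inner_apply_eq_of_apply_apply_eq_smul {P Q : H →L[ℂ] H} (hP : IsSelfAdjoint P) {τ : ℝ}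
    {e : H} (he : ‖e‖ = 1) (hPe : P e = e) (hPQe : P (Q e) = (τ : ℂ) • e) :
    inner ℂ e (Q e) = τ :=
  calc inner ℂ e (Q e) = inner ℂ (P e) (Q e) := by rw [hPe]
    _ = inner ℂ e (P (Q e)) := hP.isSymmetric e (Q e)
    _ = τ := by rw [hPQe, inner_smul_right, inner_self_eq_norm_sq_to_K, he]; simp

theorem IsStarProjection.norm_apply_sub_smul_sq {Q : H →L[ℂ] H} (hQ : IsStarProjection Q)
    {τ : ℝ} {e : H} (he : ‖e‖ = 1) (hτ : inner ℂ e (Q e) = τ) :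
    ‖Q e - (τ : ℂ) • e‖ ^ 2 = τ * (1 - τ) := by
  have hQe : ‖Q e‖ ^ 2 = τ := by
    have h : inner ℂ (Q e) (Q e) = inner ℂ e (Q (Q e)) := hQ.isSelfAdjoint.isSymmetric e (Q e)
    rw [@norm_sq_eq_re_inner ℂ, h, ← mul_apply_eq_comp, hQ.isIdempotentElem.eq, hτ]
    exact Complex.ofReal_re τ
  have hre : RCLike.re (inner ℂ (Q e) ((τ : ℂ) • e)) = τ * τ := by
    rw [inner_smul_right, ← inner_conj_symm, hτ]
    simp
  rw [@norm_sub_sq ℂ, hQe, hre, norm_smul, he, Complex.norm_real, Real.norm_eq_abs, mul_one, sq_abs]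
  ring

namespace IsIrreducibleFamily

variable {S : Set (H →L[ℂ] H)}

theorem eq_zero_or_eq_one_of_comparable (hS : IsIrreducibleFamily S) {P : H →L[ℂ] H}
    (hP : IsStarProjection P) (hPS : ∀ T ∈ S, IsSelfAdjoint T ∧ (P * T = P ∨ T * P = T)) :
    P = 0 ∨ P = 1 := by
  refine hS.eq_zero_or_eq_one hP.isIdempotentElem fun T hT => ?_
  obtain ⟨hT, h | h⟩ := hPS T hT
  exacts [hP.isSelfAdjoint.commute_of_mul_eq_left hT h,
    (hT.commute_of_mul_eq_left hP.isSelfAdjoint h).symm]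

theorem le_or_ge_algebraMap (hS : IsIrreducibleFamily S) {C : H →L[ℂ] H}
    (hC : IsSelfAdjoint C) (hCS : ∀ T ∈ S, Commute C T) (c : ℝ) :
    C ≤ algebraMap ℝ _ c ∨ algebraMap ℝ _ c ≤ C := by
  -- `(C - c)⁺` commutes with `S`, so it is zero or injective, and `(C - c)⁺ * (C - c)⁻ = 0`.
  set A := C - algebraMap ℝ (H →L[ℂ] H) c
  have hA : IsSelfAdjoint A := hC.sub (.algebraMap _ (.all c))
  have hAS (T) (hT : T ∈ S) : Commute A T := (hCS T hT).sub_left (Algebra.commute_algebraMap_left c T)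
  rcases hS.ker_eq_bot_or_eq_top (F := A⁺) fun T hT => (hAS T hT).cfcₙ_real _ with h | h
  · right
    have hneg : A⁻ = 0 := by
      ext x
      have : A⁻ x ∈ (A⁺).ker := by
        simp [LinearMap.mem_ker, ← mul_apply_eq_comp, CFC.posPart_mul_negPart]
      simpa [h] using this
    rwa [CFC.negPart_eq_zero_iff A, sub_nonneg] at hneg
  · left
    have hpos : A⁺ = 0 := by
      ext x
      simpa using (h ▸ Submodule.mem_top : x ∈ (A⁺).ker)
    rwa [CFC.posPart_eq_zero_iff A, sub_nonpos] at hpos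

theorem exists_eq_algebraMap (hS : IsIrreducibleFamily S) {C : H →L[ℂ] H}
    (hC : IsSelfAdjoint C) (hCS : ∀ T ∈ S, Commute C T) :
    ∃ r : ℝ, C = algebraMap ℝ _ r := by
  rcases subsingleton_or_nontrivial H with hH | hH
  · exact ⟨0, Subsingleton.elim _ _⟩
  obtain ⟨r, hr⟩ := ContinuousFunctionalCalculus.spectrum_nonempty (R := ℝ) C hC
  refine ⟨r, CFC.eq_algebraMap_of_spectrum_subset_singleton C r (fun s hs => ?_) hC⟩
  rcases hS.le_or_ge_algebraMap hC hCS ((r + s) / 2) with h | h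
  · rw [le_algebraMap_iff_spectrum_le hC] at h
    have := h r hr; have := h s hs
    exact le_antisymm (by linarith) (by linarith)
  · rw [algebraMap_le_iff_le_spectrum hC] at h
    have := h r hr; have := h s hs
    exact le_antisymm (by linarith) (by linarith)

theorem exists_mul_mul_eq_smul {P Q : H →L[ℂ] H} (hP : IsStarProjection P)
    (hQ : IsStarProjection Q) (hS : IsIrreducibleFamily {P, Q}) :
    ∃ τ : ℝ, P * Q * P = τ • P := by
  have hPQ : Commute ((P - Q) * (P - Q)) P :=
    hP.isIdempotentElem.commute_sub_mul_sub hQ.isIdempotentElem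
  have hQP : Commute ((P - Q) * (P - Q)) Q := by
    rw [← neg_sub Q P, neg_mul_neg]
    exact hQ.isIdempotentElem.commute_sub_mul_sub hP.isIdempotentElem
  obtain ⟨r, hr⟩ := hS.exists_eq_algebraMap
    ((hP.isSelfAdjoint.sub hQ.isSelfAdjoint).star_eq ▸ IsSelfAdjoint.star_mul_self (P - Q))
    (by rintro T (rfl | rfl); exacts [hPQ, hQP])
  exact ⟨1 - r, hP.isIdempotentElem.mul_mul_eq_smul hQ.isIdempotentElem hr⟩

theorem exists_apply_apply_eq_smul {P Q : H →L[ℂ] H} (hP : IsStarProjection P)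
    (hQ : IsStarProjection Q) (hS : IsIrreducibleFamily {P, Q}) (hP0 : P ≠ 0) :
    ∃ τ : ℝ, ∃ e : H, ‖e‖ = 1 ∧ P e = e ∧ P (Q e) = (τ : ℂ) • e := by
  obtain ⟨τ, hPQP⟩ := hS.exists_mul_mul_eq_smul hP hQ
  obtain ⟨x, hx⟩ : ∃ x, P x ≠ 0 := by
    by_contra! h
    exact hP0 (ContinuousLinearMap.ext h)
  set e : H := (‖P x‖⁻¹ : ℂ) • P x
  have hPe : P e = e := by
    rw [map_smul, ← mul_apply_eq_comp, hP.isIdempotentElem.eq]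
  refine ⟨τ, e, norm_smul_inv_norm hx, hPe, ?_⟩
  calc P (Q e) = (P * Q * P) e := by rw [mul_apply_eq_comp, mul_apply_eq_comp, hPe]
    _ = (τ : ℂ) • e := by rw [hPQP, smul_apply, hPe, Complex.coe_smul]

theorem finrank_le_two {P Q : H →L[ℂ] H} (hP : IsStarProjection P)
    (hQ : IsStarProjection Q) (hS : IsIrreducibleFamily {P, Q}) :
    FiniteDimensional ℂ H ∧ Module.finrank ℂ H ≤ 2 := by
  by_cases hP0 : P = 0
  · obtain ⟨hfin, hle⟩ := hS.finrank_le_one_of_eq_zero hQ.isIdempotentElem hP0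
    exact ⟨hfin, hle.trans one_le_two⟩
  obtain ⟨τ, e, he, hPe, hPQe⟩ := hS.exists_apply_apply_eq_smul hP hQ hP0
  have hQQe : Q (Q e) = Q e := by rw [← mul_apply_eq_comp, hQ.isIdempotentElem.eq]
  have he_mem : e ∈ Submodule.span ℂ (Set.range ![e, Q e]) := Submodule.subset_span ⟨0, rfl⟩
  have hQe_mem : Q e ∈ Submodule.span ℂ (Set.range ![e, Q e]) := Submodule.subset_span ⟨1, rfl⟩
  simpa using hS.finrank_le_card (v := ![e, Q e]) (by simp [← norm_pos_iff, he]) <| by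
    rintro T (hT | hT) i <;> rw [hT] <;> fin_cases i
    · simpa [hPe] using he_mem
    · simpa [hPQe] using Submodule.smul_mem _ (τ : ℂ) he_mem
    · simpa using hQe_mem
    · simpa [hQQe] using hQe_mem

theorem exists_isStandardPair {P Q : H →L[ℂ] H} (hP : IsStarProjection P)
    (hQ : IsStarProjection Q) (hS : IsIrreducibleFamily {P, Q})
    (hH : Module.finrank ℂ H = 2) :
    ∃ τ : ℝ, 0 < τ ∧ τ < 1 ∧ ∃ b : OrthonormalBasis (Fin 2) ℂ H, IsStandardPair P Q τ b := by
  have := (hS.finrank_le_two hP hQ).1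
  have hP0 : P ≠ 0 := fun hP0 => by
    have := (hS.finrank_le_one_of_eq_zero hQ.isIdempotentElem hP0).2
    omega
  obtain ⟨τ, e, he, hPe, hPQe⟩ := hS.exists_apply_apply_eq_smul hP hQ hP0
  have hinner := inner_apply_eq_of_apply_apply_eq_smul hP.isSelfAdjoint he hPe hPQe
  set w := Q e - (τ : ℂ) • e with hw
  have hw0 : w ≠ 0 := by
    intro h0
    have hQe : Q e = (τ : ℂ) • e := sub_eq_zero.mp h0
    have hle1 := (hS.finrank_le_card (v := ![e]) (by simp [← norm_pos_iff, he]) <| by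
      rintro T (hT | hT) i <;> rw [hT] <;> fin_cases i <;>
        simp [hPe, hQe, Submodule.smul_of_tower_mem, Submodule.mem_span_singleton_self]).2
    rw [Fintype.card_fin] at hle1
    omega
  refine ⟨τ, exists_isStandardPair_of_finrank_eq_two hH he hw0 ?_
    (hQ.norm_apply_sub_smul_sq he hinner) hPe ?_ (by rw [hw]; abel) ?_⟩
  · rw [hw, inner_sub_right, inner_smul_right, hinner, inner_self_eq_norm_sq_to_K, he]
    simp
  · rw [hw, map_sub, map_smul, hPQe, hPe, sub_self]
  · rw [hw, map_sub, map_smul, ← mul_apply_eq_comp, hQ.isIdempotentElem.eq, sub_smul, one_smul]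

end IsIrreducibleFamily

end

/-- An irreducible Hilbert representation
`Q 1 ≤ … ≤ Q (k-1) ≤ R i ≤ Q (k+1) ≤ … ≤ Q m` (`i = 0, 1`) of a unitarily
one-parameter poset has dimension at most 2; in dimension 2 the `Q j` below `k`
vanish, those above `k` are the identity, and `R 0`, `R 1` have the standard
one-parameter form in a suitable orthonormal basis. -/
theorem stmt_1 {H : Type*} [NormedAddCommGroup H] [InnerProductSpace ℂ H]
    [CompleteSpace H]
    (m k : ℕ) (hk1 : 1 ≤ k) (hkm : k ≤ m)
    (Q : ℕ → H →L[ℂ] H) (R : Fin 2 → H →L[ℂ] H)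
    (hQproj : ∀ j, 1 ≤ j → j ≤ m → j ≠ k → IsSelfAdjoint (Q j) ∧ Q j ∘L Q j = Q j)
    (hRproj : ∀ i, IsSelfAdjoint (R i) ∧ R i ∘L R i = R i)
    (hQQ : ∀ i j, 1 ≤ i → i ≤ j → j ≤ m → i ≠ k → j ≠ k → Q i ∘L Q j = Q i)
    (hQR : ∀ j, 1 ≤ j → j < k → ∀ i, Q j ∘L R i = Q j)
    (hRQ : ∀ j, k < j → j ≤ m → ∀ i, R i ∘L Q j = R i)
    (hirr : ∀ K : Submodule ℂ H, IsClosed (K : Set H) →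
      (∀ j, 1 ≤ j → j ≤ m → j ≠ k → ∀ x ∈ K, Q j x ∈ K) →
      (∀ i, ∀ x ∈ K, R i x ∈ K) → K = ⊥ ∨ K = ⊤) :
    (FiniteDimensional ℂ H ∧ Module.finrank ℂ H ≤ 2) ∧
    (Module.finrank ℂ H = 2 →
      (∀ j, 1 ≤ j → j < k → Q j = 0) ∧
      (∀ j, k < j → j ≤ m → Q j = 1) ∧
      ∃ τ : ℝ, 0 < τ ∧ τ < 1 ∧
        ∃ b : OrthonormalBasis (Fin 2) ℂ H,
          R 0 (b 0) = b 0 ∧ R 0 (b 1) = 0 ∧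
          R 1 (b 0) = (τ : ℂ) • b 0 + ((Real.sqrt (τ * (1 - τ)) : ℝ) : ℂ) • b 1 ∧
          R 1 (b 1) = ((Real.sqrt (τ * (1 - τ)) : ℝ) : ℂ) • b 0 + ((1 - τ : ℝ) : ℂ) • b 1) := by
  have hQ (j) (h1 : 1 ≤ j) (h2 : j ≤ m) (h3 : j ≠ k) : IsStarProjection (Q j) :=
    ⟨(hQproj j h1 h2 h3).2, (hQproj j h1 h2 h3).1⟩
  have hR (i) : IsStarProjection (R i) := ⟨(hRproj i).2, (hRproj i).1⟩
  have hS : IsIrreducibleFamily (Set.range R ∪ Q '' {j | 1 ≤ j ∧ j ≤ m ∧ j ≠ k}) :=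
    fun K hK hinv => hirr K hK (fun j h1 h2 h3 => hinv _ (.inr ⟨j, ⟨h1, h2, h3⟩, rfl⟩))
      (fun i => hinv _ (.inl ⟨i, rfl⟩))
  have hQ01 (j) (h1 : 1 ≤ j) (h2 : j ≤ m) (h3 : j ≠ k) : Q j = 0 ∨ Q j = 1 := by
    refine hS.eq_zero_or_eq_one_of_comparable (hQ j h1 h2 h3) ?_
    rintro T (⟨i, rfl⟩ | ⟨i, ⟨hi1, hi2, hi3⟩, rfl⟩)
    · refine ⟨(hR i).isSelfAdjoint, ?_⟩
      rcases h3.lt_or_gt with hjk | hjk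
      exacts [.inl (hQR j h1 hjk i), .inr (hRQ j hjk h2 i)]
    · refine ⟨(hQ i hi1 hi2 hi3).isSelfAdjoint, ?_⟩
      rcases le_total i j with hij | hij
      exacts [.inr (hQQ i j hi1 hij h2 hi3 h3), .inl (hQQ j i h1 hij hi2 h3 hi3)]
  have hSR : IsIrreducibleFamily {R 0, R 1} :=
    (hS.of_union (by rintro _ ⟨j, ⟨h1, h2, h3⟩, rfl⟩; exact hQ01 j h1 h2 h3)).mono
      (Set.range_subset_iff.mpr fun i => by fin_cases i <;> simp)
  refine ⟨hSR.finrank_le_two (hR 0) (hR 1), fun hH => ?_⟩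
  obtain ⟨τ, hτ0, hτ1, b, hb⟩ := hSR.exists_isStandardPair (hR 0) (hR 1) hH
  refine ⟨fun j h1 h2 => ?_, fun j h1 h2 => ?_, τ, hτ0, hτ1, b, hb⟩
  · refine (hQ01 j h1 (h2.le.trans hkm) h2.ne).resolve_right fun hQj => hb.left_ne_one ?_
    simpa [hQj, ← ContinuousLinearMap.mul_def] using hQR j h1 h2 0
  · refine (hQ01 j (hk1.trans h1.le) h2 h1.ne').resolve_left fun hQj => hb.left_ne_zero ?_
    simpa [hQj, ← ContinuousLinearMap.mul_def] using (hRQ j h1 h2 0).symm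
end

section
/- Let H be a complex Hilbert space and let Q_1, …, Q_{k−1}, R_1, R_2, Q_{k+1}, …, Q_m be orthogonal projections on H satisfying Q_1 ≤ … ≤ Q_{k−1} ≤ R_i ≤ Q_{k+1} ≤ … ≤ Q_m for i = 1, 2. Let α_1, …, α_{k−1}, α_{k,1}, α_{k,2}, α_{k+1}, …, α_m be positive reals and set A = Σ_{j≠k} α_j Q_j + α_{k,1} R_1 + α_{k,2} R_2 and Σ = α_{k,1} + α_{k,2} + 2 Σ_{j>k} α_j. Then the spectrum of A is contained in Δ_d ∪ { (Σ + λ)/2 : |α_{k,1} − α_{k,2}| < λ < α_{k,1} + α_{k,2} } ∪ { (Σ − λ)/2 : |α_{k,1} − α_{k,2}| < λ < α_{k,1} + α_{k,2} }, where Δ_d is the finite set { 0, α_m, α_{m−1}+α_m, …, α_{k+1}+⋯+α_m, α_{k,1}+α_{k+1}+⋯+α_m, α_{k,2}+α_{k+1}+⋯+α_m, α_{k,1}+α_{k,2}+α_{k+1}+⋯+α_m, α_{k−1}+α_{k,1}+α_{k,2}+α_{k+1}+⋯+α_m, …, α_1+⋯+α_{k−1}+α_{k,1}+α_{k,2}+α_{k+1}+⋯+α_m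 }. -/
open Finset

set_option maxHeartbeats 1600000

lemma aux_two_proj_unit {H : Type*} [NormedAddCommGroup H] [InnerProductSpace ℂ H]
    [CompleteSpace H]
    (P0 P1 E : H →L[ℂ] H)
    (hP0sa : IsSelfAdjoint P0) (hP1sa : IsSelfAdjoint P1) (hEsa : IsSelfAdjoint E)
    (hP0P0 : P0 * P0 = P0) (hP1P1 : P1 * P1 = P1) (hEE : E * E = E)
    (hP0E : P0 * E = P0) (hEP0 : E * P0 = P0) (hP1E : P1 * E = P1) (hEP1 : E * P1 = P1)
    (r : ℝ) (hr : 0 < r)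
    (q : ℂ) (hq : ¬ (q.im = 0 ∧ 0 ≤ q.re ∧ q.re ≤ r)) :
    IsUnit (q • (1 : H →L[ℂ] H) -
      (((r : ℝ) : ℂ) • ((P0 - P1) * (P0 - P1)) + (((r/2 : ℝ)) : ℂ) • (1 - E))) := by
  set W : H →L[ℂ] H := (P0 - P1) * (P0 - P1) with hW
  set V : H →L[ℂ] H := ((r : ℝ) : ℂ) • W + (((r/2 : ℝ)) : ℂ) • (1 - E) with hV
  have hcoe : ∀ (s : ℝ) (X : H →L[ℂ] H), ((s : ℝ) : ℂ) • X = s • X := by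
    intro s X
    rw [show ((s : ℝ) : ℂ) = algebraMap ℝ ℂ s from rfl, algebraMap_smul]
  have hDsa : IsSelfAdjoint (P0 - P1) := hP0sa.sub hP1sa
  have hWsa : IsSelfAdjoint W := by
    rw [hW, IsSelfAdjoint, star_mul, hDsa.star_eq]
  have h1Esa : IsSelfAdjoint ((1 : H →L[ℂ] H) - E) := (IsSelfAdjoint.one (R := H →L[ℂ] H)).sub hEsa
  have h1E1E : ((1 : H →L[ℂ] H) - E) * (1 - E) = 1 - E := by
    simp only [mul_sub, sub_mul, one_mul, mul_one, hEE]; abel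
  have sq_nonneg : ∀ (s : ℝ) (X : H →L[ℂ] H), 0 ≤ s → IsSelfAdjoint X → X * X = X →
      (0 : H →L[ℂ] H) ≤ ((s : ℝ) : ℂ) • X := by
    intro s X hs hXsa hXX
    rw [hcoe]
    have h := star_mul_self_nonneg (Real.sqrt s • X)
    rwa [star_smul, star_trivial, hXsa.star_eq, smul_mul_smul_comm,
      Real.mul_self_sqrt hs, hXX] at h
  have sq_nonneg' : ∀ (s : ℝ) (X : H →L[ℂ] H), 0 ≤ s → IsSelfAdjoint X →
      (0 : H →L[ℂ] H) ≤ ((s : ℝ) : ℂ) • (X * X) := by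
    intro s X hs hXsa
    rw [hcoe]
    have h := star_mul_self_nonneg (Real.sqrt s • X)
    rwa [star_smul, star_trivial, hXsa.star_eq, smul_mul_smul_comm,
      Real.mul_self_sqrt hs] at h
  have hV0 : (0 : H →L[ℂ] H) ≤ V := by
    rw [hV]
    exact add_nonneg (sq_nonneg' r (P0 - P1) hr.le hDsa)
      (sq_nonneg (r/2) (1 - E) (by linarith) h1Esa h1E1E)
  have hGsq : (P0 + P1 - E) * (P0 + P1 - E) = E - W := by
    rw [hW]
    simp only [mul_sub, sub_mul, mul_add, add_mul, hP0P0, hP1P1, hEE, hP0E, hEP0, hP1E, hEP1]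
    abel
  have hVle : (0 : H →L[ℂ] H) ≤ algebraMap ℝ (H →L[ℂ] H) r - V := by
    have key : algebraMap ℝ (H →L[ℂ] H) r - V =
        ((r : ℝ) : ℂ) • ((P0 + P1 - E) * (P0 + P1 - E)) + (((r/2 : ℝ)) : ℂ) • (1 - E) := by
      rw [hGsq, hV, Algebra.algebraMap_eq_smul_one]
      simp only [hcoe]
      module
    rw [key]
    exact add_nonneg (sq_nonneg' r (P0 + P1 - E) hr.le (by exact (hP0sa.add hP1sa).sub hEsa))
      (sq_nonneg (r/2) (1 - E) (by linarith) h1Esa h1E1E)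
  have hVsa : IsSelfAdjoint V := by
    rw [hV]
    have hstar : ∀ s : ℝ, star ((s : ℝ) : ℂ) = ((s : ℝ) : ℂ) := fun s => by
      simp [Complex.star_def, Complex.conj_ofReal]
    exact (IsSelfAdjoint.smul (hstar r) hWsa).add (IsSelfAdjoint.smul (hstar (r/2)) h1Esa)
  have hqn : q ∉ spectrum ℂ V := by
    intro hmem
    have hre : q = q.re := hVsa.mem_spectrum_eq_re hmem
    have hsr : SpectrumRestricts V Complex.reCLM :=
      SpectrumRestricts.real_iff.mpr fun x hx => hVsa.mem_spectrum_eq_re hx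
    have hmemR : q.re ∈ spectrum ℝ V := hsr.apply_mem hmem
    have h0 : 0 ≤ q.re := spectrum_nonneg_of_nonneg hV0 hmemR
    have hmemR' : r - q.re ∈ spectrum ℝ (algebraMap ℝ (H →L[ℂ] H) r - V) := by
      rw [← spectrum.singleton_sub_eq]
      exact Set.sub_mem_sub rfl hmemR
    have h1 : 0 ≤ r - q.re := spectrum_nonneg_of_nonneg hVle hmemR'
    exact hq ⟨by rw [hre]; simp, h0, by linarith⟩
  rw [spectrum.notMem_iff, Algebra.algebraMap_eq_smul_one] at hqn
  exact hqn

/-- Spectrum localization for a positive linear combination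
`A = ∑_{j≠k} α j • Q j + β 0 • R 0 + β 1 • R 1` of the projections of a Hilbert
representation of a unitarily one-parameter poset: the spectrum is contained in the
finite set `Δ_d` of the indicated partial sums together with the two symmetric
continuous intervals `(Σ ± λ)/2`, `|β 0 - β 1| < λ < β 0 + β 1`. -/
theorem stmt_2 {H : Type*} [NormedAddCommGroup H] [InnerProductSpace ℂ H]
    [CompleteSpace H]
    (m k : ℕ) (hk1 : 1 ≤ k) (hkm : k ≤ m)
    (Q : ℕ → H →L[ℂ] H) (R : Fin 2 → H →L[ℂ] H)
    (hQproj : ∀ j, 1 ≤ j → j ≤ m → j ≠ k → IsSelfAdjoint (Q j) ∧ Q j ∘L Q j = Q j)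
    (hRproj : ∀ i, IsSelfAdjoint (R i) ∧ R i ∘L R i = R i)
    (hQQ : ∀ i j, 1 ≤ i → i ≤ j → j ≤ m → i ≠ k → j ≠ k → Q i ∘L Q j = Q i)
    (hQR : ∀ j, 1 ≤ j → j < k → ∀ i, Q j ∘L R i = Q j)
    (hRQ : ∀ j, k < j → j ≤ m → ∀ i, R i ∘L Q j = R i)
    (α : ℕ → ℝ) (β : Fin 2 → ℝ)
    (hα : ∀ j, 1 ≤ j → j ≤ m → j ≠ k → 0 < α j) (hβ : ∀ i, 0 < β i) :
    spectrum ℂ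
        (∑ j ∈ (Icc 1 m).erase k, (α j : ℂ) • Q j + (β 0 : ℂ) • R 0 + (β 1 : ℂ) • R 1)
      ⊆ (fun x : ℝ => (x : ℂ)) ''
        ({x : ℝ | ∃ t, k + 1 ≤ t ∧ t ≤ m + 1 ∧ x = ∑ j ∈ Icc t m, α j} ∪
         {β 0 + ∑ j ∈ Icc (k + 1) m, α j, β 1 + ∑ j ∈ Icc (k + 1) m, α j} ∪
         {x : ℝ | ∃ t, 1 ≤ t ∧ t ≤ k + 1 ∧
            x = β 0 + β 1 + ∑ j ∈ (Icc t m).erase k, α j} ∪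
         {x : ℝ | ∃ lam : ℝ, |β 0 - β 1| < lam ∧ lam < β 0 + β 1 ∧
            (x = ((β 0 + β 1 + 2 * ∑ j ∈ Icc (k + 1) m, α j) + lam) / 2 ∨
             x = ((β 0 + β 1 + 2 * ∑ j ∈ Icc (k + 1) m, α j) - lam) / 2)}) := by
  set A : H →L[ℂ] H :=
    ∑ j ∈ (Icc 1 m).erase k, (α j : ℂ) • Q j + (β 0 : ℂ) • R 0 + (β 1 : ℂ) • R 1 with hAdef
  set c : ℝ := ∑ j ∈ Icc (k + 1) m, α j with hcdef
  intro z hz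
  by_contra hset
  apply spectrum.mem_iff.mp hz
  rw [Algebra.algebraMap_eq_smul_one]
  -- basic helpers
  have hstar : ∀ s : ℝ, star ((s : ℝ) : ℂ) = ((s : ℝ) : ℂ) := fun s => by
    simp [Complex.star_def, Complex.conj_ofReal]
  have hQsa : ∀ j, 1 ≤ j → j ≤ m → j ≠ k → IsSelfAdjoint (Q j) :=
    fun j h1 h2 h3 => (hQproj j h1 h2 h3).1
  have flip : ∀ X Y Z : H →L[ℂ] H, IsSelfAdjoint X → IsSelfAdjoint Y → IsSelfAdjoint Z →
      X * Y = Z → Y * X = Z := by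
    intro X Y Z hX hY hZ h
    have := congrArg star h
    rwa [star_mul, hX.star_eq, hY.star_eq, hZ.star_eq] at this
  -- the cumulative chain
  set F : ℕ → H →L[ℂ] H := fun t => if t = 0 then 0 else if t ≤ m then Q t else 1 with hFdef
  have hF0 : F 0 = 0 := by simp [hFdef]
  have hFtop : F (m+1) = 1 := by simp [hFdef]
  have hFQ : ∀ j, 1 ≤ j → j ≤ m → F j = Q j := by
    intro j h1 h2
    have : ¬ j = 0 := by omega
    simp [hFdef, this, h2]
  have hFsa : ∀ t, t ≠ k → IsSelfAdjoint (F t) := by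
    intro t ht
    by_cases h0 : t = 0
    · simp only [hFdef, h0, if_pos rfl]; exact (IsSelfAdjoint.zero (R := H →L[ℂ] H))
    by_cases hm : t ≤ m
    · simp only [hFdef, if_neg h0, if_pos hm]; exact hQsa t (by omega) hm ht
    · simp only [hFdef, if_neg h0, if_neg hm]; exact IsSelfAdjoint.one (R := H →L[ℂ] H)
  have hFF : ∀ s t, s ≤ t → s ≠ k → t ≠ k → F s * F t = F s := by
    intro s t hst hs ht
    by_cases hs0 : s = 0
    · simp [hFdef, hs0]
    by_cases htm : t ≤ m
    · have hsm : s ≤ m := le_trans hst htm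
      rw [hFQ s (by omega) hsm, hFQ t (by omega) htm]
      exact hQQ s t (by omega) hst htm hs ht
    · have ht0 : ¬ t = 0 := by omega
      simp only [hFdef, if_neg ht0, if_neg htm, mul_one]
  have hFF' : ∀ s t, s ≤ t → s ≠ k → t ≠ k → F t * F s = F s := fun s t hst hs ht =>
    flip (F s) (F t) (F s) (hFsa s hs) (hFsa t ht) (hFsa s hs) (hFF s t hst hs ht)
  have hFidem : ∀ t, t ≠ k → F t * F t = F t := fun t ht => hFF t t le_rfl ht ht
  have hFR : ∀ t, t < k → ∀ i, F t * R i = F t := by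
    intro t ht i
    by_cases h0 : t = 0
    · simp [hFdef, h0]
    · rw [hFQ t (by omega) (by omega)]
      exact hQR t (by omega) ht i
  have hRF : ∀ t, t < k → ∀ i, R i * F t = F t := fun t ht i =>
    flip (F t) (R i) (F t) (hFsa t (by omega)) (hRproj i).1 (hFsa t (by omega)) (hFR t ht i)
  have hRFgt : ∀ t, k < t → ∀ i, R i * F t = R i := by
    intro t ht i
    by_cases htm : t ≤ m
    · rw [hFQ t (by omega) htm]; exact hRQ t ht htm i
    · have ht0 : ¬ t = 0 := by omega
      simp only [hFdef, if_neg ht0, if_neg htm, mul_one]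
  have hFRgt : ∀ t, k < t → ∀ i, F t * R i = R i := fun t ht i =>
    flip (R i) (F t) (R i) (hRproj i).1 (hFsa t (by omega)) (hRproj i).1 (hRFgt t ht i)
  -- selfadjointness of A
  have hAsa : IsSelfAdjoint A := by
    rw [hAdef, IsSelfAdjoint, star_add, star_add, star_sum]
    have h1 : ∀ j ∈ (Icc 1 m).erase k, star ((α j : ℂ) • Q j) = (α j : ℂ) • Q j := by
      intro j hj
      simp only [mem_erase, mem_Icc] at hj
      rw [star_smul, hstar, (hQsa j hj.2.1 hj.2.2 hj.1).star_eq]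
    rw [Finset.sum_congr rfl h1, star_smul, star_smul, hstar, hstar,
      (hRproj 0).1.star_eq, (hRproj 1).1.star_eq]
  -- blocks
  have hEtsa : ∀ t, 1 ≤ t → t ≠ k → t ≠ k + 1 → IsSelfAdjoint (F t - F (t-1)) := by
    intro t h1 h2 h3
    exact (hFsa t h2).sub (hFsa (t-1) (by omega))
  have hQmulE : ∀ j, 1 ≤ j → j ≤ m → j ≠ k → ∀ t, 1 ≤ t → t ≠ k → t ≠ k + 1 →
      Q j * (F t - F (t-1)) = if t ≤ j then (F t - F (t-1)) else 0 := by
    intro j h1 h2 h3 t ht1 htk htk1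
    rw [← hFQ j h1 h2, mul_sub]
    by_cases h : t ≤ j
    · rw [if_pos h, hFF' t j h htk h3, hFF' (t-1) j (by omega) (by omega) h3]
    · rw [if_neg h, hFF j t (by omega) h3 htk, hFF j (t-1) (by omega) h3 (by omega), sub_self]
  have hRmulE_lt : ∀ t, 1 ≤ t → t < k → ∀ i, R i * (F t - F (t-1)) = F t - F (t-1) := by
    intro t ht1 ht i
    rw [mul_sub, hRF t ht i, hRF (t-1) (by omega) i]
  have hRmulE_gt : ∀ t, k + 1 < t → ∀ i, R i * (F t - F (t-1)) = 0 := by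
    intro t ht i
    rw [mul_sub, hRFgt t (by omega) i, hRFgt (t-1) (by omega) i, sub_self]
  set sval : ℕ → ℝ := fun t => (if t < k then β 0 + β 1 else 0) + ∑ j ∈ (Icc t m).erase k, α j
    with hsvaldef
  have hAE : ∀ t ∈ Icc 1 (m+1) \ ({k, k+1} : Finset ℕ),
      A * (F t - F (t-1)) = ((sval t : ℝ) : ℂ) • (F t - F (t-1)) := by
    intro t ht
    simp only [Finset.mem_sdiff, Finset.mem_Icc, Finset.mem_insert, Finset.mem_singleton,
      not_or] at ht
    obtain ⟨⟨ht1, htm⟩, htk, htk1⟩ := ht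
    rw [hAdef, add_mul, add_mul, Finset.sum_mul]
    have hsum : ∑ j ∈ (Icc 1 m).erase k, ((α j : ℂ) • Q j) * (F t - F (t-1)) =
        ((∑ j ∈ (Icc t m).erase k, α j : ℝ) : ℂ) • (F t - F (t-1)) := by
      have h1 : ∀ j ∈ (Icc 1 m).erase k, ((α j : ℂ) • Q j) * (F t - F (t-1)) =
          if t ≤ j then (α j : ℂ) • (F t - F (t-1)) else 0 := by
        intro j hj
        simp only [mem_erase, mem_Icc] at hj
        rw [smul_mul_assoc, hQmulE j hj.2.1 hj.2.2 hj.1 t ht1 htk htk1]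
        split_ifs
        · rfl
        · exact smul_zero _
      have hfe : ((Icc 1 m).erase k).filter (fun j => t ≤ j) = (Icc t m).erase k := by
        ext j
        simp only [Finset.mem_filter, Finset.mem_erase, Finset.mem_Icc]
        omega
      rw [Finset.sum_congr rfl h1, ← Finset.sum_filter, hfe, ← Finset.sum_smul]
      norm_cast
    by_cases hlt : t < k
    · rw [hsum, smul_mul_assoc, smul_mul_assoc, hRmulE_lt t ht1 hlt 0, hRmulE_lt t ht1 hlt 1,
        hsvaldef]
      simp only [if_pos hlt]
      push_cast
      module
    · have hgt : k + 1 < t := by omega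
      rw [hsum, smul_mul_assoc, smul_mul_assoc, hRmulE_gt t hgt 0, hRmulE_gt t hgt 1,
        smul_zero, smul_zero, add_zero, add_zero, hsvaldef]
      simp only [if_neg hlt]
      push_cast
      module
  have hEA : ∀ t ∈ Icc 1 (m+1) \ ({k, k+1} : Finset ℕ),
      (F t - F (t-1)) * A = ((sval t : ℝ) : ℂ) • (F t - F (t-1)) := by
    intro t ht
    have htt := ht
    simp only [Finset.mem_sdiff, Finset.mem_Icc, Finset.mem_insert, Finset.mem_singleton,
      not_or] at htt
    obtain ⟨⟨ht1, htm⟩, htk, htk1⟩ := htt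
    exact flip A (F t - F (t-1)) _ hAsa (hEtsa t ht1 htk htk1)
      (IsSelfAdjoint.smul (hstar _) (hEtsa t ht1 htk htk1)) (hAE t ht)
  -- middle block
  set Em : H →L[ℂ] H := F (k+1) - F (k-1) with hEmdef
  set P0 : H →L[ℂ] H := R 0 - F (k-1) with hP0def
  set P1 : H →L[ℂ] H := R 1 - F (k-1) with hP1def
  have hk1k : k - 1 ≠ k := by omega
  have hk1k' : k + 1 ≠ k := by omega
  have hEmsa : IsSelfAdjoint Em := (hFsa (k+1) hk1k').sub (hFsa (k-1) hk1k)
  have hP0sa : IsSelfAdjoint P0 := (hRproj 0).1.sub (hFsa (k-1) hk1k)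
  have hP1sa : IsSelfAdjoint P1 := (hRproj 1).1.sub (hFsa (k-1) hk1k)
  have hEmEm : Em * Em = Em := by
    rw [hEmdef]
    rw [mul_sub, sub_mul, sub_mul, hFidem (k+1) hk1k', hFidem (k-1) hk1k,
      hFF (k-1) (k+1) (by omega) hk1k hk1k', hFF' (k-1) (k+1) (by omega) hk1k hk1k']
    abel
  have hRR : ∀ i, R i * R i = R i := fun i => (hRproj i).2
  have hPEm : ∀ i : Fin 2, (R i - F (k-1)) * Em = R i - F (k-1) := by
    intro i
    rw [hEmdef, mul_sub, sub_mul, sub_mul, hRFgt (k+1) (by omega) i, hRF (k-1) (by omega) i,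
      hFF (k-1) (k+1) (by omega) hk1k hk1k', hFidem (k-1) hk1k]
    abel
  have hEmP : ∀ i : Fin 2, Em * (R i - F (k-1)) = R i - F (k-1) := by
    intro i
    rw [hEmdef, mul_sub, sub_mul, sub_mul, hFRgt (k+1) (by omega) i, hFR (k-1) (by omega) i,
      hFF' (k-1) (k+1) (by omega) hk1k hk1k', hFidem (k-1) hk1k]
    abel
  have hPP : ∀ i : Fin 2, (R i - F (k-1)) * (R i - F (k-1)) = R i - F (k-1) := by
    intro i
    rw [mul_sub, sub_mul, sub_mul, hRR i, hRF (k-1) (by omega) i, hFR (k-1) (by omega) i,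
      hFidem (k-1) hk1k]
    abel
  have hP0Em : P0 * Em = P0 := hPEm 0
  have hP1Em : P1 * Em = P1 := hPEm 1
  have hEmP0 : Em * P0 = P0 := hEmP 0
  have hEmP1 : Em * P1 = P1 := hEmP 1
  have hP0P0 : P0 * P0 = P0 := hPP 0
  have hP1P1 : P1 * P1 = P1 := hPP 1
  have hAEm : A * Em = ((c : ℝ) : ℂ) • Em + ((β 0 : ℝ) : ℂ) • P0 + ((β 1 : ℝ) : ℂ) • P1 := by
    rw [hAdef, add_mul, add_mul, Finset.sum_mul]
    have hsum : ∑ j ∈ (Icc 1 m).erase k, ((α j : ℂ) • Q j) * Em = ((c : ℝ) : ℂ) • Em := by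
      have h1 : ∀ j ∈ (Icc 1 m).erase k, ((α j : ℂ) • Q j) * Em =
          if k + 1 ≤ j then (α j : ℂ) • Em else 0 := by
        intro j hj
        simp only [mem_erase, mem_Icc] at hj
        rw [smul_mul_assoc, ← hFQ j hj.2.1 hj.2.2, hEmdef, mul_sub]
        by_cases h : k + 1 ≤ j
        · rw [if_pos h, hFF' (k+1) j h hk1k' hj.1, hFF' (k-1) j (by omega) hk1k hj.1]
        · have hjk : j < k := by omega
          rw [if_neg h, hFF j (k+1) (by omega) hj.1 hk1k', hFF j (k-1) (by omega) hj.1 hk1k,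
            sub_self, smul_zero]
      have hfe : ((Icc 1 m).erase k).filter (fun j => k + 1 ≤ j) = Icc (k+1) m := by
        ext j
        simp only [Finset.mem_filter, Finset.mem_erase, Finset.mem_Icc]
        omega
      rw [Finset.sum_congr rfl h1, ← Finset.sum_filter, hfe, ← Finset.sum_smul, hcdef]
      norm_cast
    have hREm : ∀ i : Fin 2, R i * Em = R i - F (k-1) := by
      intro i
      rw [hEmdef, mul_sub, hRFgt (k+1) (by omega) i, hRF (k-1) (by omega) i]
    rw [hsum, smul_mul_assoc, smul_mul_assoc, hREm 0, hREm 1, ← hP0def, ← hP1def]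
  have hEmA : Em * A = ((c : ℝ) : ℂ) • Em + ((β 0 : ℝ) : ℂ) • P0 + ((β 1 : ℝ) : ℂ) • P1 := by
    refine flip A Em _ hAsa hEmsa ?_ hAEm
    exact ((IsSelfAdjoint.smul (hstar _) hEmsa).add
      (IsSelfAdjoint.smul (hstar _) hP0sa)).add (IsSelfAdjoint.smul (hstar _) hP1sa)
  -- telescoping sum
  have hsub : ({k, k+1} : Finset ℕ) ⊆ Icc 1 (m+1) := by
    intro t ht
    simp only [Finset.mem_insert, Finset.mem_singleton] at ht
    simp only [Finset.mem_Icc]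
    omega
  have htel : ∀ n : ℕ, ∑ t ∈ Icc 1 n, (F t - F (t-1)) = F n - F 0 := by
    intro n
    induction n with
    | zero => rw [show Icc 1 0 = (∅ : Finset ℕ) from Finset.Icc_eq_empty (by omega)]; simp
    | succ n ih =>
      rw [Finset.sum_Icc_succ_top (by omega), ih]
      simp only [Nat.add_sub_cancel]
      abel
  have hsum1 : ∑ t ∈ Icc 1 (m+1) \ ({k, k+1} : Finset ℕ), (F t - F (t-1)) + Em = 1 := by
    have h1 := Finset.sum_sdiff (f := fun t => F t - F (t-1)) hsub
    rw [Finset.sum_pair (by omega : k ≠ k + 1), htel (m+1), hF0, hFtop, sub_zero] at h1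
    rw [← h1, hEmdef]
    simp only [Nat.add_sub_cancel]
    abel
  -- scalars and exclusions
  set x' : ℂ := z - ((c : ℝ) : ℂ) with hx'def
  set q : ℂ := x' * (((β 0 + β 1 : ℝ) : ℂ) - x') with hqdef
  have hzs : ∀ t ∈ Icc 1 (m+1) \ ({k, k+1} : Finset ℕ), z ≠ ((sval t : ℝ) : ℂ) := by
    intro t ht heq
    simp only [Finset.mem_sdiff, Finset.mem_Icc, Finset.mem_insert, Finset.mem_singleton,
      not_or] at ht
    obtain ⟨⟨ht1, htm⟩, htk, htk1⟩ := ht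
    by_cases hlt : t < k
    · refine hset ⟨sval t, ?_, heq.symm⟩
      refine Or.inl (Or.inr ⟨t, ht1, by omega, ?_⟩)
      simp only [hsvaldef]
      simp only [if_pos hlt]
    · have hgt : k + 1 < t := by omega
      refine hset ⟨sval t, ?_, heq.symm⟩
      refine Or.inl (Or.inl (Or.inl ⟨t, by omega, htm, ?_⟩))
      simp only [hsvaldef]
      simp only [if_neg hlt, zero_add]
      rw [Finset.erase_eq_of_notMem (by simp only [Finset.mem_Icc]; omega)]
  have hb0 : 0 < β 0 := hβ 0
  have hb1 : 0 < β 1 := hβ 1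
  have hq_not : ¬ (q.im = 0 ∧ 0 ≤ q.re ∧ q.re ≤ β 0 * β 1) := by
    rintro ⟨him, h0, h1⟩
    have hare : x'.re = z.re - c := by simp [hx'def]
    have haim : x'.im = z.im := by simp [hx'def]
    set a : ℝ := z.re - c with hadef
    set b : ℝ := z.im with hbdef
    have hqim : q.im = b * ((β 0 + β 1) - 2*a) := by
      rw [hqdef]
      simp only [Complex.mul_im, Complex.sub_re, Complex.sub_im, Complex.ofReal_re,
        Complex.ofReal_im, hare, haim]
      ring
    have hqre : q.re = a * ((β 0 + β 1) - a) + b * b := by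
      rw [hqdef]
      simp only [Complex.mul_re, Complex.sub_re, Complex.sub_im, Complex.ofReal_re,
        Complex.ofReal_im, hare, haim]
      ring
    have hb : b = 0 := by
      by_contra hb
      rcases mul_eq_zero.mp (hqim ▸ him) with h | h
      · exact hb h
      · have hb2 : 0 < b * b := mul_self_pos.mpr hb
        nlinarith [sq_nonneg (β 0 - β 1)]
    have hzre : z = ((c + a : ℝ) : ℂ) := by
      apply Complex.ext
      · rw [Complex.ofReal_re, hadef]; ring
      · rw [Complex.ofReal_im, ← hbdef]; exact hb
    rw [hb] at hqre
    have h0' : 0 ≤ a * ((β 0 + β 1) - a) := by nlinarith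
    have h1' : a * ((β 0 + β 1) - a) ≤ β 0 * β 1 := by nlinarith
    have ha0 : 0 ≤ a := by nlinarith
    have haS : a ≤ β 0 + β 1 := by nlinarith
    rcases eq_or_lt_of_le ha0 with ha0' | ha0'
    · refine hset ⟨c + a, ?_, hzre.symm⟩
      refine Or.inl (Or.inl (Or.inl ⟨k+1, le_rfl, by omega, ?_⟩))
      rw [← hcdef, ← ha0', add_zero]
    rcases eq_or_lt_of_le haS with haS' | haS'
    · refine hset ⟨c + a, ?_, hzre.symm⟩
      refine Or.inl (Or.inr ⟨k+1, by omega, le_rfl, ?_⟩)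
      rw [Finset.erase_eq_of_notMem (by simp only [Finset.mem_Icc]; omega), ← hcdef, ← haS']
      ring
    rcases lt_trichotomy a (β 0) with hab0 | hab0 | hab0
    · rcases lt_trichotomy a (β 1) with hab1 | hab1 | hab1
      · refine hset ⟨c + a, ?_, hzre.symm⟩
        refine Or.inr ⟨(β 0 + β 1) - 2*a, abs_lt.mpr ⟨by linarith, by linarith⟩,
          by linarith, Or.inr (by ring)⟩
      · refine hset ⟨c + a, ?_, hzre.symm⟩
        refine Or.inl (Or.inl (Or.inr ?_))
        simp only [Set.mem_insert_iff, Set.mem_singleton_iff]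
        right; rw [hab1]; ring
      · nlinarith
    · refine hset ⟨c + a, ?_, hzre.symm⟩
      refine Or.inl (Or.inl (Or.inr ?_))
      simp only [Set.mem_insert_iff, Set.mem_singleton_iff]
      left; rw [hab0]; ring
    · rcases lt_trichotomy a (β 1) with hab1 | hab1 | hab1
      · nlinarith
      · refine hset ⟨c + a, ?_, hzre.symm⟩
        refine Or.inl (Or.inl (Or.inr ?_))
        simp only [Set.mem_insert_iff, Set.mem_singleton_iff]
        right; rw [hab1]; ring
      · refine hset ⟨c + a, ?_, hzre.symm⟩
        refine Or.inr ⟨2*a - (β 0 + β 1), abs_lt.mpr ⟨by linarith, by linarith⟩,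
          by linarith, Or.inl (by ring)⟩
  -- the middle unit
  have hU : IsUnit (q • (1 : H →L[ℂ] H) -
      (((β 0 * β 1 : ℝ) : ℂ) • ((P0 - P1) * (P0 - P1)) +
        (((β 0 * β 1)/2 : ℝ) : ℂ) • (1 - Em))) :=
    aux_two_proj_unit P0 P1 Em hP0sa hP1sa hEmsa hP0P0 hP1P1 hEmEm hP0Em hEmP0 hP1Em hEmP1
      (β 0 * β 1) (mul_pos hb0 hb1) q hq_not
  set W : H →L[ℂ] H := (P0 - P1) * (P0 - P1) with hWdef
  set V : H →L[ℂ] H := ((β 0 * β 1 : ℝ) : ℂ) • W + (((β 0 * β 1)/2 : ℝ) : ℂ) • (1 - Em)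
    with hVdef
  have hWexp : W = P0 + P1 - P0*P1 - P1*P0 := by
    rw [hWdef]
    simp only [mul_sub, sub_mul, hP0P0, hP1P1]
    abel
  have hWEm : W * Em = W := by
    rw [hWexp, sub_mul, sub_mul, add_mul, hP0Em, hP1Em, mul_assoc, hP1Em, mul_assoc, hP0Em]
  have hEmW : Em * W = W := by
    rw [hWexp, mul_sub, mul_sub, mul_add, hEmP0, hEmP1, ← mul_assoc, hEmP0, ← mul_assoc, hEmP1]
  have hVEm : V * Em = ((β 0 * β 1 : ℝ) : ℂ) • W := by
    rw [hVdef, add_mul, smul_mul_assoc, smul_mul_assoc, hWEm, sub_mul, one_mul, hEmEm,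
      sub_self, smul_zero, add_zero]
  have hP0P0' : ∀ X, P0 * (P0 * X) = P0 * X := fun X => by rw [← mul_assoc, hP0P0]
  have hP1P1' : ∀ X, P1 * (P1 * X) = P1 * X := fun X => by rw [← mul_assoc, hP1P1]
  have hP0W : P0 * W = W * P0 := by
    rw [hWexp]
    simp only [mul_sub, sub_mul, mul_add, add_mul, mul_assoc, hP0P0, hP1P1, hP0P0', hP1P1']
    abel
  have hP1W : P1 * W = W * P1 := by
    rw [hWexp]
    simp only [mul_sub, sub_mul, mul_add, add_mul, mul_assoc, hP0P0, hP1P1, hP0P0', hP1P1']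
    abel
  have hAW : A * W = W * A := by
    have hl : A * W = ((c : ℝ) : ℂ) • W + ((β 0 : ℝ) : ℂ) • (W * P0) +
        ((β 1 : ℝ) : ℂ) • (W * P1) := by
      rw [← hEmW, ← mul_assoc, hAEm, add_mul, add_mul, smul_mul_assoc, smul_mul_assoc,
        smul_mul_assoc, hEmW, hP0W, hP1W]
    have hr : W * A = ((c : ℝ) : ℂ) • W + ((β 0 : ℝ) : ℂ) • (W * P0) +
        ((β 1 : ℝ) : ℂ) • (W * P1) := by
      rw [← hWEm, mul_assoc, hEmA, mul_add, mul_add, mul_smul_comm, mul_smul_comm,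
        mul_smul_comm, hWEm]
    rw [hl, hr]
  have hAEmc : A * Em = Em * A := by rw [hAEm, hEmA]
  have hAV : A * V = V * A := by
    rw [hVdef]
    simp only [mul_add, add_mul, mul_smul_comm, smul_mul_assoc, mul_sub, sub_mul,
      mul_one, one_mul, hAW, hAEmc]
  set M : H →L[ℂ] H := z • (1 : H →L[ℂ] H) - A with hMdef
  have hMV : M * (q • (1 : H →L[ℂ] H) - V) = (q • (1 : H →L[ℂ] H) - V) * M := by
    rw [hMdef]
    simp only [sub_mul, mul_sub, smul_mul_assoc, mul_smul_comm, one_mul, mul_one, hAV]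
    module
  have hcommMu : Commute M (↑hU.unit⁻¹ : H →L[ℂ] H) := by
    have h0 : Commute M (q • (1 : H →L[ℂ] H) - V) := hMV
    exact (Commute.units_inv_right (hU.unit_spec.symm ▸ h0))
  set Y : H →L[ℂ] H := (((β 0 + β 1 : ℝ) : ℂ) - x') • Em - ((β 0 : ℝ) : ℂ) • P0 -
    ((β 1 : ℝ) : ℂ) • P1 with hYdef
  have hMEm : M * Em = x' • Em - ((β 0 : ℝ) : ℂ) • P0 - ((β 1 : ℝ) : ℂ) • P1 := by
    rw [hMdef, sub_mul, smul_mul_assoc, one_mul, hAEm, hx'def]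
    module
  have hEmM : Em * M = x' • Em - ((β 0 : ℝ) : ℂ) • P0 - ((β 1 : ℝ) : ℂ) • P1 := by
    rw [hMdef, mul_sub, mul_smul_comm, mul_one, hEmA, hx'def]
    module
  have hEmY : Em * Y = Y := by
    rw [hYdef]
    simp only [mul_sub, mul_smul_comm, hEmEm, hEmP0, hEmP1]
  have hYEm : Y * Em = Y := by
    rw [hYdef]
    simp only [sub_mul, smul_mul_assoc, hEmEm, hP0Em, hP1Em]
  have idl : (x' • Em - ((β 0 : ℝ) : ℂ) • P0 - ((β 1 : ℝ) : ℂ) • P1) * Y =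
      q • Em - ((β 0 * β 1 : ℝ) : ℂ) • W := by
    rw [hYdef, hWexp, hqdef]
    simp only [mul_sub, sub_mul, smul_mul_assoc, mul_smul_comm, smul_smul,
      hEmEm, hEmP0, hEmP1, hP0Em, hP1Em, hP0P0, hP1P1]
    push_cast
    module
  have idr : Y * (x' • Em - ((β 0 : ℝ) : ℂ) • P0 - ((β 1 : ℝ) : ℂ) • P1) =
      q • Em - ((β 0 * β 1 : ℝ) : ℂ) • W := by
    rw [hYdef, hWexp, hqdef]
    simp only [mul_sub, sub_mul, smul_mul_assoc, mul_smul_comm, smul_smul,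
      hEmEm, hEmP0, hEmP1, hP0Em, hP1Em, hP0P0, hP1P1]
    push_cast
    module
  have hMY : M * Y = ↑hU.unit * Em := by
    rw [← hEmY, ← mul_assoc, hMEm, idl, hU.unit_spec, sub_mul, smul_mul_assoc,
      one_mul, hVEm]
  have hYM : Y * M = ↑hU.unit * Em := by
    conv_lhs => rw [← hYEm]
    rw [mul_assoc, hEmM, idr, hU.unit_spec, sub_mul, smul_mul_assoc, one_mul, hVEm]
  set Binv : H →L[ℂ] H :=
    (∑ t ∈ Icc 1 (m+1) \ ({k, k+1} : Finset ℕ), (z - ((sval t : ℝ) : ℂ))⁻¹ • (F t - F (t-1)))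
      + ↑hU.unit⁻¹ * Y with hBdef
  have hMB : M * Binv = 1 := by
    rw [hBdef, mul_add, Finset.mul_sum]
    have h1 : ∀ t ∈ Icc 1 (m+1) \ ({k, k+1} : Finset ℕ),
        M * ((z - ((sval t : ℝ) : ℂ))⁻¹ • (F t - F (t-1))) = F t - F (t-1) := by
      intro t ht
      have hMEt : M * (F t - F (t-1)) = (z - ((sval t : ℝ) : ℂ)) • (F t - F (t-1)) := by
        rw [hMdef, sub_mul, smul_mul_assoc, one_mul, hAE t ht, sub_smul]
      rw [mul_smul_comm, hMEt, smul_smul, inv_mul_cancel₀ (sub_ne_zero.mpr (hzs t ht)),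
        one_smul]
    rw [Finset.sum_congr rfl h1]
    have h2 : M * (↑hU.unit⁻¹ * Y) = Em := by
      rw [← mul_assoc, hcommMu.eq, mul_assoc, hMY, ← mul_assoc, Units.inv_mul, one_mul]
    rw [h2]
    exact hsum1
  have hBM : Binv * M = 1 := by
    rw [hBdef, add_mul, Finset.sum_mul]
    have h1 : ∀ t ∈ Icc 1 (m+1) \ ({k, k+1} : Finset ℕ),
        ((z - ((sval t : ℝ) : ℂ))⁻¹ • (F t - F (t-1))) * M = F t - F (t-1) := by
      intro t ht
      have hEtM : (F t - F (t-1)) * M = (z - ((sval t : ℝ) : ℂ)) • (F t - F (t-1)) := by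
        rw [hMdef, mul_sub, mul_smul_comm, mul_one, hEA t ht, sub_smul]
      rw [smul_mul_assoc, hEtM, smul_smul, inv_mul_cancel₀ (sub_ne_zero.mpr (hzs t ht)),
        one_smul]
    rw [Finset.sum_congr rfl h1]
    have h2 : (↑hU.unit⁻¹ * Y) * M = Em := by
      rw [mul_assoc, hYM, ← mul_assoc, Units.inv_mul, one_mul]
    rw [h2]
    exact hsum1
  exact ⟨⟨M, Binv, hMB, hBM⟩, rfl⟩
end

section
/- Let H be a complex Hilbert space, S a finite index set, (P_g)_{g∈S} orthogonal projections on H, and (α_g)_{g∈S} positive reals with Σ_{g∈S} α_g P_g = I. If α_h > 1 for some h ∈ S, then P_h = 0. -/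
open scoped InnerProductSpace

/-- If `(P g)` are orthogonal projections, `(α g)` positive reals with
`∑ α g • P g = I` and `α h > 1` for some `h`, then `P h = 0`. -/
theorem stmt_6 {H : Type*} [NormedAddCommGroup H] [InnerProductSpace ℂ H]
    [CompleteSpace H]
    {S : Type*} [Fintype S] (P : S → H →L[ℂ] H)
    (hproj : ∀ g, IsSelfAdjoint (P g) ∧ P g ∘L P g = P g)
    (α : S → ℝ) (hα : ∀ g, 0 < α g)
    (horth : ∑ g, (α g : ℂ) • P g = 1)
    (h : S) (hh : 1 < α h) :
    P h = 0 := by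
  have hinner : ∀ g (z : H), ⟪z, P g z⟫_ℂ = (‖P g z‖ ^ 2 : ℝ) := by
    intro g z
    have h1 : P g (P g z) = P g z := by
      conv_rhs => rw [← (hproj g).2]
      rfl
    have h2 : ⟪z, P g (P g z)⟫_ℂ = ⟪P g z, P g z⟫_ℂ := by
      rw [← ContinuousLinearMap.adjoint_inner_left, (hproj g).1.adjoint_eq]
    calc ⟪z, P g z⟫_ℂ = ⟪z, P g (P g z)⟫_ℂ := by rw [h1]
      _ = ⟪P g z, P g z⟫_ℂ := h2
      _ = (‖P g z‖ ^ 2 : ℝ) := by rw [inner_self_eq_norm_sq_to_K]; norm_num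
  have key : ∀ z : H, (‖z‖ ^ 2 : ℝ) = ∑ g, α g * ‖P g z‖ ^ 2 := by
    intro z
    have := congrArg (fun T : H →L[ℂ] H => ⟪z, T z⟫_ℂ) horth
    simp only [ContinuousLinearMap.sum_apply, inner_sum,
      ContinuousLinearMap.smul_apply, inner_smul_right,
      ContinuousLinearMap.one_apply] at this
    have := congrArg Complex.re this
    simpa [hinner, inner_self_eq_norm_sq_to_K, ← Complex.ofReal_pow, Complex.ofReal_re] using this.symm
  ext x
  set y := P h x with hy
  have hPy : P h y = y := by
    rw [hy]
    conv_rhs => rw [← (hproj h).2]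
    rfl
  have hk := key y
  have hle : α h * ‖P h y‖ ^ 2 ≤ ∑ g, α g * ‖P g y‖ ^ 2 :=
    Finset.single_le_sum (f := fun g => α g * ‖P g y‖ ^ 2)
      (fun g _ => mul_nonneg (hα g).le (sq_nonneg _)) (Finset.mem_univ h)
  rw [hPy] at hle
  have hle' : α h * ‖y‖ ^ 2 ≤ ‖y‖ ^ 2 := hle.trans_eq hk.symm
  have hs : ‖y‖ ^ 2 ≤ 0 := by
    by_contra hc
    push_neg at hc
    nlinarith [mul_lt_mul_of_pos_right hh hc]
  have : ‖y‖ = 0 := by nlinarith [sq_nonneg ‖y‖, norm_nonneg y]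
  simpa [hy] using norm_eq_zero.mp this
end

section
/- Let H be a complex Hilbert space, S a finite index set, (P_g)_{g∈S} orthogonal projections on H, and (α_g)_{g∈S} positive reals with Σ_{g∈S} α_g P_g = I. Suppose the family (P_g)_{g∈S} is irreducible, i.e., the only closed subspaces of H invariant under every P_g are {0} and H. If α_h = 1 for some h ∈ S, then P_h = 0 or P_h = I. -/
/-!
If `P h x = x`, then `∑_{g ≠ h} α g • P g x = x - P h x = 0`; pairing with `x` gives
`∑_{g ≠ h} α g ‖P g x‖² = 0`, so every other `P g` kills `x`. Hence the closed subspace of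
fixed points of `P h` is invariant under the whole family, and irreducibility makes it `{0}`
(so `P h = 0`) or all of `H` (so `P h = 1`).
-/

open scoped InnerProductSpace

namespace ContinuousLinearMap

variable {𝕜 E : Type*} [RCLike 𝕜] [NormedAddCommGroup E] [InnerProductSpace 𝕜 E] [CompleteSpace E]

theorem inner_apply_self_eq_norm_sq_of_isSelfAdjoint_of_idempotent {P : E →L[𝕜] E}
    (hsa : IsSelfAdjoint P) (hidem : P ∘L P = P) (x : E) :
    ⟪x, P x⟫_𝕜 = (‖P x‖ : 𝕜) ^ 2 := by
  calc ⟪x, P x⟫_𝕜 = ⟪x, P (P x)⟫_𝕜 := by rw [← comp_apply, hidem]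
    _ = ⟪P x, P x⟫_𝕜 := (hsa.isSymmetric x (P x)).symm
    _ = (‖P x‖ : 𝕜) ^ 2 := inner_self_eq_norm_sq_to_K _

theorem apply_eq_zero_of_sum_smul_apply_eq_zero {ι : Type*} {s : Finset ι}
    {P : ι → E →L[𝕜] E} (hproj : ∀ g ∈ s, IsSelfAdjoint (P g) ∧ P g ∘L P g = P g)
    {α : ι → ℝ} (hα : ∀ g ∈ s, 0 < α g) {x : E}
    (hx : ∑ g ∈ s, (α g : 𝕜) • P g x = 0) :
    ∀ g ∈ s, P g x = 0 := by
  have hinner : ((∑ g ∈ s, α g * ‖P g x‖ ^ 2 : ℝ) : 𝕜) = 0 := by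
    have := congrArg (fun y => ⟪x, y⟫_𝕜) hx
    simp only [inner_sum, inner_smul_right, inner_zero_right] at this
    rw [← this]
    push_cast
    refine Finset.sum_congr rfl fun g hg => ?_
    rw [inner_apply_self_eq_norm_sq_of_isSelfAdjoint_of_idempotent (hproj g hg).1 (hproj g hg).2]
  have hterms := (Finset.sum_eq_zero_iff_of_nonneg fun g hg =>
    mul_nonneg (hα g hg).le (sq_nonneg ‖P g x‖)).1 (RCLike.ofReal_eq_zero.1 hinner)
  intro g hg
  simpa [(hα g hg).ne'] using hterms g hg

theorem apply_eq_zero_of_apply_eq_self_of_sum_smul_eq_one {ι : Type*} [Fintype ι]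
    {P : ι → E →L[𝕜] E} (hproj : ∀ g, IsSelfAdjoint (P g) ∧ P g ∘L P g = P g)
    {α : ι → ℝ} (hα : ∀ g, 0 < α g) (hsum : ∑ g, (α g : 𝕜) • P g = 1)
    {h : ι} (hh : α h = 1) {x : E} (hx : P h x = x) {g : ι} (hg : g ≠ h) :
    P g x = 0 := by
  classical
  have hrest : ∑ g ∈ Finset.univ.erase h, (α g : 𝕜) • P g x = 0 := by
    have hsum_x : ∑ g, (α g : 𝕜) • P g x = x := by simpa using congrArg (· x) hsum
    have hsplit := Finset.sum_erase_add Finset.univ (fun g => (α g : 𝕜) • P g x)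
      (Finset.mem_univ h)
    rw [hsum_x, hh, hx] at hsplit
    simpa using hsplit
  exact apply_eq_zero_of_sum_smul_apply_eq_zero (fun g _ => hproj g) (fun g _ => hα g) hrest
    g (Finset.mem_erase.2 ⟨hg, Finset.mem_univ g⟩)

end ContinuousLinearMap

open ContinuousLinearMap in
/-- If `(P g)` is an irreducible family of orthogonal projections with
`∑ α g • P g = I`, `α g > 0`, and `α h = 1` for some `h`, then `P h = 0` or `P h = I`. -/
theorem stmt_7 {H : Type*} [NormedAddCommGroup H] [InnerProductSpace ℂ H]
    [CompleteSpace H]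
    {S : Type*} [Fintype S] (P : S → H →L[ℂ] H)
    (hproj : ∀ g, IsSelfAdjoint (P g) ∧ P g ∘L P g = P g)
    (α : S → ℝ) (hα : ∀ g, 0 < α g)
    (horth : ∑ g, (α g : ℂ) • P g = 1)
    (hirr : ∀ K : Submodule ℂ H, IsClosed (K : Set H) →
      (∀ g, ∀ x ∈ K, P g x ∈ K) → K = ⊥ ∨ K = ⊤)
    (h : S) (hh : α h = 1) :
    P h = 0 ∨ P h = 1 := by
  set K : Submodule ℂ H := LinearMap.ker ((1 - P h : H →L[ℂ] H) : H →ₗ[ℂ] H)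
  have hmem : ∀ x, x ∈ K ↔ P h x = x := fun x => by simp [K, sub_eq_zero, eq_comm (a := x)]
  have hinv : ∀ g, ∀ x ∈ K, P g x ∈ K := by
    intro g x hxK
    have hx := (hmem x).1 hxK
    by_cases hg : g = h
    · rwa [hg, hx]
    · rw [apply_eq_zero_of_apply_eq_self_of_sum_smul_eq_one hproj hα horth hh hx hg]
      exact K.zero_mem
  rcases hirr K (1 - P h).isClosed_ker hinv with hbot | htop
  · left
    ext x
    have hPx : P h x ∈ K := (hmem _).2 (by rw [← comp_apply, (hproj h).2])
    simpa [hbot] using hPx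
  · right
    ext x
    simpa using (hmem x).1 (htop ▸ Submodule.mem_top)
end

section
/- Let H be a complex Hilbert space and let P_1, …, P_6 be orthogonal projections on H with P_6 ≤ P_1 ≤ P_5 and P_6 ≤ P_2 ≤ P_5 (this is a Hilbert representation of the poset a_8: an incomparable pair g_1, g_2 with one element g_5 above both and one element g_6 below both, together with two further mutually incomparable elements g_3, g_4). Let α_1, …, α_6 ∈ (0,1) satisfy α_1P_1 + ⋯ + α_6P_6 = I, and suppose the family (P_1, …, P_6) is irreducible. Then the representation is not essential; that is, either some P_i equals 0 or I, or P_g = P_h for some comparable pair g < h among {g_6 < g_1, g_6 < g_2, g_1 < g_5, g_2 < g_5}. -/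
/-!
Write `A = α₃P₃ + α₄P₄` for the two free projections, so that `I - A` is the weighted sum
`B` of the four projections of the diamond `g₆ < g₁, g₂ < g₅`, of total weight `c`.
Since `0 ≤ B ≤ c`, an eigenvector of `A` with eigenvalue `r ≥ 1` is killed by the four
diamond projections, and one with eigenvalue `r ≤ 1 - c` is fixed by all of them.

For two projections `p, q` and `l + m = α₃ + α₄`, `p` and `q` commute with
`(A - l)(A - m)`, so its kernel `W` is invariant under `P₃, P₄`. If moreover `l ≠ m` avoid
`(1 - c, 1)`, then `W` is the sum of two eigenspaces of `A` on which the diamond projections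
act as `0` or `I`, so `W` is invariant under every `P_i`. Take `(l, m) = (1, α₃ + α₄ - 1)`
if `∑ αᵢ ≤ 2` and `(l, m) = (1 - c, α₃ + α₄ - 1 + c)` otherwise. By irreducibility either
`W = H`, and then all diamond projections coincide, or `W = 0`, and then the `l`-eigenspace
vanishes; it contains `ker P₅` when `l = 1` and `ran P₆` when `l = 1 - c`, so `P₅ = I` or
`P₆ = 0`.
-/

open scoped InnerProductSpace
open RCLike Set

/-- With `A = a p + b q`, both `p (A² - (a + b) A)` and `(A² - (a + b) A) p` equal
`a b (p q p - p)`, and `(A - l) (A - m) = A² - (a + b) A + l m`. -/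
theorem IsIdempotentElem.commute_sub_smul_one_mul_sub_smul_one {S R : Type*} [CommRing S]
    [Ring R] [Algebra S R] {p q : R} (hp : IsIdempotentElem p) (hq : IsIdempotentElem q)
    {a b l m : S} (hlm : l + m = a + b) :
    Commute p ((a • p + b • q - l • 1) * (a • p + b • q - m • 1)) := by
  obtain rfl : m = a + b - l := by linear_combination hlm
  have hpp (x : R) : x * p * p = x * p := by rw [mul_assoc, hp.eq]
  simp only [Commute, SemiconjBy, mul_sub, sub_mul, mul_add, add_mul, smul_mul_assoc,
    mul_smul_comm, mul_one, one_mul, ← mul_assoc, hp.eq, hq.eq, hpp]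
  module

theorem Module.End.exists_add_of_mul_sub_smul_one_apply_eq_zero {K M : Type*} [Field K]
    [AddCommGroup M] [Module K M] {f : Module.End K M} {l m : K} (hlm : l ≠ m) {x : M}
    (hx : ((f - l • 1) * (f - m • 1)) x = 0) :
    ∃ u v, x = u + v ∧ f u = l • u ∧ f v = m • v := by
  have hfx : f (f x - m • x) = l • (f x - m • x) := by
    simpa [sub_eq_zero] using hx
  have hlm' : l - m ≠ 0 := sub_ne_zero.mpr hlm
  refine ⟨(l - m)⁻¹ • (f x - m • x), x - (l - m)⁻¹ • (f x - m • x), by abel, ?_, ?_⟩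
  · rw [map_smul, hfx, smul_comm]
  · have hw : (l - m)⁻¹ • (l - m) • (f x - m • x) = f x - m • x := inv_smul_smul₀ hlm' _
    rw [map_sub, map_smul, hfx]
    linear_combination (norm := module) -hw

namespace ContinuousLinearMap

variable {R M ι : Type*} [CommRing R] [AddCommGroup M] [Module R M] [TopologicalSpace M]
  [ContinuousAdd M]

theorem apply_eq_smul_iff_of_add_eq_one {A B : M →L[R] M} (h : A + B = 1) {r : R} {x : M} :
    A x = r • x ↔ B x = (1 - r) • x := by
  have hx : A x + B x = x := by rw [← add_apply, h, one_apply_eq_self]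
  constructor <;> intro h <;> linear_combination (norm := module) hx - h

variable [ContinuousConstSMul R M] {A : M →L[R] M} {Q : ι → M →L[R] M} {s : Finset ι}
  {β : ι → R} {t : M →L[R] M}

theorem eq_one_of_forall_mul_eq (hsum : A + ∑ j ∈ s, β j • Q j = 1)
    (ht : IsIdempotentElem t) (hle : ∀ j ∈ s, Q j * t = Q j) (h : ∀ x, A x = x → x = 0) :
    t = 1 := by
  refine ext fun x => (sub_eq_zero.mp (h _ ?_)).symm
  have htz : t (x - t x) = 0 := by
    rw [map_sub, ← mul_apply_eq_comp, ht.eq, sub_self]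
  have hB : (∑ j ∈ s, β j • Q j) (x - t x) = (1 - 1 : R) • (x - t x) := by
    rw [sub_self, zero_smul, sum_apply]
    exact Finset.sum_eq_zero fun j hj => by
      rw [smul_apply, ← hle j hj, mul_apply_eq_comp, htz, map_zero, smul_zero]
  simpa using (apply_eq_smul_iff_of_add_eq_one hsum).mpr hB

theorem eq_zero_of_forall_mul_eq (hsum : A + ∑ j ∈ s, β j • Q j = 1)
    (hge : ∀ j ∈ s, Q j * t = t) (h : ∀ x, A x = (1 - ∑ j ∈ s, β j) • x → x = 0) :
    t = 0 := by
  refine ext fun x => h _ ((apply_eq_smul_iff_of_add_eq_one hsum).mpr ?_)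
  rw [sum_apply, sub_sub_cancel, Finset.sum_smul]
  exact Finset.sum_congr rfl fun j hj => by rw [smul_apply, ← mul_apply_eq_comp, hge j hj]

end ContinuousLinearMap

namespace IsStarProjection

variable {𝕜 E ι : Type*} [RCLike 𝕜] [NormedAddCommGroup E] [InnerProductSpace 𝕜 E]
  [CompleteSpace E] {p q : E →L[𝕜] E} {a b : ℝ} {Q : ι → E →L[𝕜] E} {s : Finset ι}
  {β : ι → ℝ}

lemma re_inner_apply_self (hp : IsStarProjection p) (x : E) : re ⟪p x, x⟫_𝕜 = ‖p x‖ ^ 2 := by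
  obtain ⟨_, hp⟩ := isStarProjection_iff_eq_starProjection_range.mp hp
  rw [hp]
  exact Submodule.re_inner_starProjection_eq_normSq _ x

lemma norm_apply_le (hp : IsStarProjection p) (x : E) : ‖p x‖ ≤ ‖x‖ := by
  simpa using p.le_of_opNorm_le hp.norm_le x

lemma apply_eq_self_of_norm_eq (hp : IsStarProjection p) {x : E} (hx : ‖p x‖ = ‖x‖) :
    p x = x := by
  obtain ⟨_, hp⟩ := isStarProjection_iff_eq_starProjection_range.mp hp
  rw [hp] at hx ⊢
  exact Submodule.starProjection_eq_self_iff.mpr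
    ((Submodule.mem_iff_norm_starProjection _ _).mpr hx)

lemma re_inner_sum_smul_apply_self (hQ : ∀ j ∈ s, IsStarProjection (Q j)) (x : E) :
    re ⟪(∑ j ∈ s, (β j : 𝕜) • Q j) x, x⟫_𝕜 = ∑ j ∈ s, β j * ‖Q j x‖ ^ 2 := by
  simp only [sum_apply, smul_apply, sum_inner, inner_smul_left, map_sum, conj_ofReal,
    re_ofReal_mul]
  exact Finset.sum_congr rfl fun j hj => by rw [(hQ j hj).re_inner_apply_self]

lemma apply_eq_zero_of_sum_smul_apply_eq_smul (hQ : ∀ j ∈ s, IsStarProjection (Q j))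
    (hβ : ∀ j ∈ s, 0 < β j) {t : ℝ} (ht : t ≤ 0) {x : E}
    (hx : (∑ j ∈ s, (β j : 𝕜) • Q j) x = (t : 𝕜) • x) : ∀ j ∈ s, Q j x = 0 := by
  have hsum := re_inner_sum_smul_apply_self (β := β) hQ x
  rw [hx, inner_smul_left, conj_ofReal, re_ofReal_mul, inner_self_eq_norm_sq] at hsum
  have hterm (j) (hj : j ∈ s) : 0 ≤ β j * ‖Q j x‖ ^ 2 := mul_nonneg (hβ j hj).le (sq_nonneg _)
  replace hterm := (Finset.sum_eq_zero_iff_of_nonneg hterm).mp <| le_antisymm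
    (hsum ▸ mul_nonpos_of_nonpos_of_nonneg ht (sq_nonneg _)) (Finset.sum_nonneg hterm)
  intro j hj
  simpa [(hβ j hj).ne'] using hterm j hj

lemma apply_eq_self_of_sum_smul_apply_eq_smul (hQ : ∀ j ∈ s, IsStarProjection (Q j))
    (hβ : ∀ j ∈ s, 0 < β j) {t : ℝ} (ht : ∑ j ∈ s, β j ≤ t) {x : E}
    (hx : (∑ j ∈ s, (β j : 𝕜) • Q j) x = (t : 𝕜) • x) : ∀ j ∈ s, Q j x = x := by
  have hsum := re_inner_sum_smul_apply_self (β := β) hQ x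
  rw [hx, inner_smul_left, conj_ofReal, re_ofReal_mul, inner_self_eq_norm_sq] at hsum
  have hgap (j) (hj : j ∈ s) : 0 ≤ β j * (‖x‖ ^ 2 - ‖Q j x‖ ^ 2) :=
    mul_nonneg (hβ j hj).le (sub_nonneg.mpr (pow_le_pow_left₀ (norm_nonneg _)
      ((hQ j hj).norm_apply_le x) 2))
  have hterm := (Finset.sum_eq_zero_iff_of_nonneg hgap).mp <| le_antisymm (by
    rw [Finset.sum_congr rfl fun j _ => mul_sub (β j) _ _, Finset.sum_sub_distrib,
      ← Finset.sum_mul, ← hsum]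
    exact sub_nonpos.mpr (mul_le_mul_of_nonneg_right ht (sq_nonneg _))) (Finset.sum_nonneg hgap)
  intro j hj
  refine (hQ j hj).apply_eq_self_of_norm_eq ?_
  have := hterm j hj
  simp only [mul_eq_zero, (hβ j hj).ne', false_or, sub_eq_zero] at this
  exact ((sq_eq_sq₀ (norm_nonneg _) (norm_nonneg _)).mp this).symm

lemma forall_apply_eq_zero_or_forall_apply_eq_self (hQ : ∀ j ∈ s, IsStarProjection (Q j))
    (hβ : ∀ j ∈ s, 0 < β j)
    (hsum : (a : 𝕜) • p + (b : 𝕜) • q + ∑ j ∈ s, (β j : 𝕜) • Q j = 1) {r : ℝ}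
    (hr : r ∉ Ioo (1 - ∑ j ∈ s, β j) 1) {x : E}
    (hx : ((a : 𝕜) • p + (b : 𝕜) • q) x = (r : 𝕜) • x) :
    (∀ j ∈ s, Q j x = 0) ∨ ∀ j ∈ s, Q j x = x := by
  replace hx : (∑ j ∈ s, (β j : 𝕜) • Q j) x = ((1 - r : ℝ) : 𝕜) • x := by
    rw [RCLike.ofReal_sub, RCLike.ofReal_one]
    exact (ContinuousLinearMap.apply_eq_smul_iff_of_add_eq_one hsum).mp hx
  rcases not_and_or.mp hr with hr | hr
  · exact Or.inr (apply_eq_self_of_sum_smul_apply_eq_smul hQ hβ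
      (by linarith [not_lt.mp hr]) hx)
  · exact Or.inl (apply_eq_zero_of_sum_smul_apply_eq_smul hQ hβ
      (by linarith [not_lt.mp hr]) hx)

lemma apply_eq_apply_of_apply_eq_smul (hQ : ∀ j ∈ s, IsStarProjection (Q j))
    (hβ : ∀ j ∈ s, 0 < β j)
    (hsum : (a : 𝕜) • p + (b : 𝕜) • q + ∑ j ∈ s, (β j : 𝕜) • Q j = 1) {r : ℝ}
    (hr : r ∉ Ioo (1 - ∑ j ∈ s, β j) 1) {x : E}
    (hx : ((a : 𝕜) • p + (b : 𝕜) • q) x = (r : 𝕜) • x) {j k : ι} (hj : j ∈ s) (hk : k ∈ s) :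
    Q j x = Q k x := by
  rcases forall_apply_eq_zero_or_forall_apply_eq_self hQ hβ hsum hr hx with h | h <;>
    rw [h j hj, h k hk]

lemma apply_apply_eq_smul_of_apply_eq_smul (hQ : ∀ j ∈ s, IsStarProjection (Q j))
    (hβ : ∀ j ∈ s, 0 < β j)
    (hsum : (a : 𝕜) • p + (b : 𝕜) • q + ∑ j ∈ s, (β j : 𝕜) • Q j = 1) {r : ℝ}
    (hr : r ∉ Ioo (1 - ∑ j ∈ s, β j) 1) {x : E}
    (hx : ((a : 𝕜) • p + (b : 𝕜) • q) x = (r : 𝕜) • x) {j : ι} (hj : j ∈ s) :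
    ((a : 𝕜) • p + (b : 𝕜) • q) (Q j x) = (r : 𝕜) • Q j x := by
  rcases forall_apply_eq_zero_or_forall_apply_eq_self hQ hβ hsum hr hx with h | h <;>
    simp [h j hj, hx]

lemma forall_eq_zero_of_apply_eq_smul_or_forall_eq (hp : IsStarProjection p)
    (hq : IsStarProjection q)
    (hQ : ∀ j ∈ s, IsStarProjection (Q j)) (hβ : ∀ j ∈ s, 0 < β j)
    (hsum : (a : 𝕜) • p + (b : 𝕜) • q + ∑ j ∈ s, (β j : 𝕜) • Q j = 1)
    (hirr : ∀ K : Submodule 𝕜 E, IsClosed (K : Set E) → (∀ x ∈ K, p x ∈ K) →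
      (∀ x ∈ K, q x ∈ K) → (∀ j ∈ s, ∀ x ∈ K, Q j x ∈ K) → K = ⊥ ∨ K = ⊤)
    (l m : ℝ) (hlm : l + m = a + b) (hne : l ≠ m) (hl : l ∉ Ioo (1 - ∑ j ∈ s, β j) 1)
    (hm : m ∉ Ioo (1 - ∑ j ∈ s, β j) 1) :
    (∀ x, ((a : 𝕜) • p + (b : 𝕜) • q) x = (l : 𝕜) • x → x = 0) ∨
      ∀ j ∈ s, ∀ k ∈ s, Q j = Q k := by
  set A := (a : 𝕜) • p + (b : 𝕜) • q
  set T := (A - (l : 𝕜) • 1) * (A - (m : 𝕜) • 1)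
  set W := LinearMap.ker (T : E →ₗ[𝕜] E)
  have hmemW {x} : x ∈ W ↔ T x = 0 := LinearMap.mem_ker
  have hlW {u} (hu : A u = (l : 𝕜) • u) : u ∈ W := by
    simp [hmemW, T, hu, smul_sub, smul_smul, mul_comm]
  have hmW {v} (hv : A v = (m : 𝕜) • v) : v ∈ W := by
    simp [hmemW, T, hv]
  have hdecomp {x} (hx : x ∈ W) :
      ∃ u v, x = u + v ∧ A u = (l : 𝕜) • u ∧ A v = (m : 𝕜) • v :=
    Module.End.exists_add_of_mul_sub_smul_one_apply_eq_zero (f := (A : E →ₗ[𝕜] E))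
      (RCLike.ofReal_injective.ne hne) (by simpa [T] using hmemW.mp hx)
  have hQW (j) (hj : j ∈ s) (x) (hx : x ∈ W) : Q j x ∈ W := by
    obtain ⟨u, v, rfl, hu, hv⟩ := hdecomp hx
    rw [map_add]
    exact W.add_mem (hlW (apply_apply_eq_smul_of_apply_eq_smul hQ hβ hsum hl hu hj))
      (hmW (apply_apply_eq_smul_of_apply_eq_smul hQ hβ hsum hm hv hj))
  have hcommW {r : E →L[𝕜] E} (hr : Commute r T) (x) (hx : x ∈ W) : r x ∈ W := by
    rw [hmemW] at hx ⊢
    rw [← mul_apply_eq_comp, ← hr.eq, mul_apply_eq_comp, hx, map_zero]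
  have hlm' : (l : 𝕜) + m = a + b := by exact_mod_cast hlm
  have hpT : Commute p T :=
    hp.isIdempotentElem.commute_sub_smul_one_mul_sub_smul_one hq.isIdempotentElem hlm'
  have hqT : Commute q T := by
    have := hq.isIdempotentElem.commute_sub_smul_one_mul_sub_smul_one hp.isIdempotentElem
      (hlm'.trans (add_comm _ _))
    rwa [add_comm ((b : 𝕜) • q)] at this
  rcases hirr W (ContinuousLinearMap.isClosed_ker T) (hcommW hpT) (hcommW hqT) hQW with
    hbot | htop
  · exact Or.inl fun x hx => by simpa [hbot] using hlW hx
  · refine Or.inr fun j hj k hk => ContinuousLinearMap.ext fun x => ?_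
    obtain ⟨u, v, hx, hu, hv⟩ := hdecomp (x := x) (htop ▸ Submodule.mem_top)
    rw [hx, map_add, map_add, apply_eq_apply_of_apply_eq_smul hQ hβ hsum hl hu hj hk,
      apply_eq_apply_of_apply_eq_smul hQ hβ hsum hm hv hj hk]

end IsStarProjection

lemma diamond_le_top_and_bot_le {R : Type*} [Ring R] [StarRing R] {P : Fin 6 → R}
    (hP : ∀ i, IsStarProjection (P i)) (h61 : P 5 * P 0 = P 5) (h62 : P 5 * P 1 = P 5)
    (h15 : P 0 * P 4 = P 0) (h25 : P 1 * P 4 = P 1) :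
    ∀ j ∈ ({2, 3}ᶜ : Finset (Fin 6)), P j * P 4 = P j ∧ P j * P 5 = P 5 := by
  have hdual {i j : Fin 6} (h : P i * P j = P i) : P j * P i = P i := by
    simpa [star_mul, (hP i).isSelfAdjoint.star_eq, (hP j).isSelfAdjoint.star_eq] using
      congrArg star h
  have h54 : P 5 * P 4 = P 5 := by rw [← h61, mul_assoc, h15]
  intro j hj
  fin_cases j
  · exact ⟨h15, hdual h61⟩
  · exact ⟨h25, hdual h62⟩
  · exact absurd hj (by decide)
  · exact absurd hj (by decide)
  · exact ⟨(hP 4).isIdempotentElem.eq, hdual h54⟩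
  · exact ⟨h54, (hP 5).isIdempotentElem.eq⟩

/-- The poset `a₈` (an incomparable pair `g₁, g₂` with `g₅` above both
and `g₆` below both, together with incomparable `g₃, g₄`) has no essential irreducible
orthoscalar representation: for any irreducible orthoscalar representation some
projection is `0` or `I`, or two projections at comparable elements coincide.
(Indices: `P 0, …, P 5` stand for `P₁, …, P₆`.) -/
theorem stmt_16 {H : Type*} [NormedAddCommGroup H] [InnerProductSpace ℂ H]
    [CompleteSpace H]
    (P : Fin 6 → H →L[ℂ] H)
    (hproj : ∀ i, IsSelfAdjoint (P i) ∧ P i ∘L P i = P i)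
    (h61 : P 5 ∘L P 0 = P 5) (h62 : P 5 ∘L P 1 = P 5)
    (h15 : P 0 ∘L P 4 = P 0) (h25 : P 1 ∘L P 4 = P 1)
    (α : Fin 6 → ℝ) (hα : ∀ i, 0 < α i ∧ α i < 1)
    (horth : ∑ i, (α i : ℂ) • P i = 1)
    (hirr : ∀ K : Submodule ℂ H, IsClosed (K : Set H) →
      (∀ i, ∀ x ∈ K, P i x ∈ K) → K = ⊥ ∨ K = ⊤) :
    (∃ i, P i = 0 ∨ P i = 1) ∨
    P 5 = P 0 ∨ P 5 = P 1 ∨ P 0 = P 4 ∨ P 1 = P 4 := by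
  set s : Finset (Fin 6) := {2, 3}ᶜ
  have hP (i) : IsStarProjection (P i) := ⟨(hproj i).2, (hproj i).1⟩
  have hsum : (α 2 : ℂ) • P 2 + (α 3 : ℂ) • P 3 + ∑ j ∈ s, (α j : ℂ) • P j = 1 := by
    rw [← horth, ← Finset.sum_add_sum_compl {2, 3}, Finset.sum_pair (by decide)]
  have hdiamond := diamond_le_top_and_bot_le hP h61 h62 h15 h25
  have hc : 0 < ∑ j ∈ s, α j := Finset.sum_pos (fun j _ => (hα j).1) ⟨0, by decide⟩
  have hirr' (K : Submodule ℂ H) (hK : IsClosed (K : Set H)) (h2 : ∀ x ∈ K, P 2 x ∈ K)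
      (h3 : ∀ x ∈ K, P 3 x ∈ K) (hs : ∀ j ∈ s, ∀ x ∈ K, P j x ∈ K) : K = ⊥ ∨ K = ⊤ :=
    hirr K hK fun i => by fin_cases i <;> first | exact h2 | exact h3 | exact hs _ (by decide)
  have key := (hP 2).forall_eq_zero_of_apply_eq_smul_or_forall_eq (hP 3) (fun j _ => hP j)
    (fun j _ => (hα j).1) hsum hirr'
  rcases le_or_gt (α 2 + α 3 + ∑ j ∈ s, α j) 2 with hT | hT
  · rcases key 1 (α 2 + α 3 - 1) (by ring) (by linarith)
      (fun h => lt_irrefl _ h.2) (fun h => by linarith [h.1]) with hbot | heq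
    · refine Or.inl ⟨4, Or.inr ?_⟩
      exact ContinuousLinearMap.eq_one_of_forall_mul_eq hsum (hP 4).isIdempotentElem
        (fun j hj => (hdiamond j hj).1) fun x hx => hbot x (by simpa using hx)
    · exact Or.inr (Or.inl (heq 5 (by decide) 0 (by decide)))
  · rcases key (1 - ∑ j ∈ s, α j) (α 2 + α 3 - 1 + ∑ j ∈ s, α j) (by ring)
      (by linarith) (fun h => lt_irrefl _ h.1) (fun h => by linarith [h.2]) with hbot | heq
    · refine Or.inl ⟨5, Or.inl ?_⟩
      exact ContinuousLinearMap.eq_zero_of_forall_mul_eq hsum (fun j hj => (hdiamond j hj).2)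
        fun x hx => hbot x (by push_cast; exact hx)
    · exact Or.inr (Or.inl (heq 5 (by decide) 0 (by decide)))
end

section
/- For every integer m ≥ 1 there exist reals α_1, …, α_6 ∈ (0,1), a complex Hilbert space H with dim H = 2m + 1, and orthogonal projections P_1, …, P_6 on H with P_1 ≤ P_5, P_2 ≤ P_5, P_3 ≤ P_6, P_4 ≤ P_6 (a Hilbert representation of the poset a_4), such that α_1P_1 + ⋯ + α_6P_6 = I, the family (P_1, …, P_6) is irreducible, every P_i is different from 0 and from I, and P_1 ≠ P_5, P_2 ≠ P_5, P_3 ≠ P_6, P_4 ≠ P_6 (i.e., the representation is essential). -/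
/-!
Work in `ℂ^(2m+1)` with standard basis `e₀, …, e_{2m}`. Let `P₅`, `P₆` project onto
`span {e₀, …, e_{2m-1}}` and `span {e₁, …, e_{2m}}`. For `k < 2m` put `s_k² = (2k+1)/(4m)` and
`c_k² = 1 - s_k²`; `P₁`, `P₂` project onto the span of the vectors `c_k e_k ± s_k e_{k+1}` with
`k` even, and `P₃`, `P₄` likewise with `k` odd. The cross terms cancel in `P₁ + P₂` and
`P₃ + P₄`, so both are diagonal, and with character `(½, ½, ½, ½, 1/4m, 1/4m)` the weighted sum
is `∑_{k<2m} ((1 - k/2m) E_k + ((k+1)/2m) E_{k+1})`, which telescopes to the identity (`E_k` the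
coordinate projections).

Irreducibility: `P₁ + P₂` has pairwise distinct eigenvalues on the `e_k`, so a nonzero invariant
subspace contains some `e_k`; the rank-one pieces of `P₁` and `P₃` then lead from `e_k` to its
neighbours `e_{k±1}`. Essentiality is a dimension count: the ranks are `m, m, m, m, 2m, 2m` in
dimension `2m + 1`.
-/

open Finset Function Submodule InnerProductSpace ContinuousLinearMap
open scoped InnerProductSpace

section General

variable {𝕜 E ι κ : Type*} [RCLike 𝕜] [NormedAddCommGroup E] [InnerProductSpace 𝕜 E]

theorem Finset.sum_range_two_mul {M : Type*} [AddCommMonoid M] (f : ℕ → M) (m : ℕ) :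
    ∑ k ∈ range (2 * m), f k = ∑ j ∈ range m, (f (2 * j) + f (2 * j + 1)) := by
  induction m with
  | zero => simp
  | succ m ih =>
    rw [mul_add, mul_one, sum_range_succ, sum_range_succ, sum_range_succ, ih, add_assoc]

theorem Finset.sum_range_one_sub_smul_add_smul_succ {R M : Type*} [Ring R] [AddCommGroup M]
    [Module R M] (f : ℕ → M) (t : ℕ → R) (n : ℕ) (h₀ : t 0 = 0) (hn : t n = 1) :
    ∑ k ∈ range n, ((1 - t k) • f k + t (k + 1) • f (k + 1)) =
      ∑ k ∈ range (n + 1), f k := by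
  have htel := sum_range_sub (fun k => t k • f k) n
  simp only [h₀, hn, zero_smul, one_smul, sub_zero] at htel
  rw [sum_range_succ, ← htel, ← sum_add_distrib]
  refine sum_congr rfl fun k _ => ?_
  rw [sub_smul, one_smul]
  abel

theorem Submodule.smul_mem_of_sum_smul_mem_of_eigenvectors {K M ι : Type*} [Field K]
    [AddCommGroup M] [Module K M] [DecidableEq ι] {N : Submodule K M} {T : M →ₗ[K] M}
    (hN : ∀ x ∈ N, T x ∈ N) {b : ι → M} {d : ι → K} (hd : Injective d)
    (hb : ∀ i, T (b i) = d i • b i) (s : Finset ι) (c : ι → K)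
    (hs : ∑ i ∈ s, c i • b i ∈ N) : ∀ i ∈ s, c i • b i ∈ N := by
  induction s using Finset.induction_on generalizing c with
  | empty => simp
  | insert a s ha ih =>
    rw [sum_insert ha] at hs
    have hshift : ∑ i ∈ s, ((d i - d a) * c i) • b i ∈ N := by
      convert N.sub_mem (hN _ hs) (N.smul_mem (d a) hs) using 1
      simp only [map_add, map_sum, map_smul, hb, smul_add, smul_sum, smul_smul, sub_mul, sub_smul,
        sum_sub_distrib, mul_comm (c _)]
      abel
    have hrest : ∀ i ∈ s, c i • b i ∈ N := fun i hi => by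
      have hne : d i - d a ≠ 0 := sub_ne_zero.mpr (hd.ne (ne_of_mem_of_not_mem hi ha))
      simpa [smul_smul, hne] using N.smul_mem (d i - d a)⁻¹ (ih _ hshift i hi)
    intro i hi
    rcases mem_insert.mp hi with rfl | hi
    · simpa using N.sub_mem hs (N.sum_mem hrest)
    · exact hrest i hi

theorem Submodule.starProjection_ne_of_finrank_ne {U V : Submodule 𝕜 E}
    [U.HasOrthogonalProjection] [V.HasOrthogonalProjection]
    (h : Module.finrank 𝕜 U ≠ Module.finrank 𝕜 V) : U.starProjection ≠ V.starProjection :=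
  fun he => h (by rw [starProjection_inj.mp he])

theorem Submodule.starProjection_ne_zero_and_ne_one [FiniteDimensional 𝕜 E]
    {U : Submodule 𝕜 E}
    (h₀ : 0 < Module.finrank 𝕜 U) (h₁ : Module.finrank 𝕜 U < Module.finrank 𝕜 E) :
    U.starProjection ≠ 0 ∧ U.starProjection ≠ 1 := by
  constructor
  · rw [← starProjection_bot]
    exact starProjection_ne_of_finrank_ne (by rw [finrank_bot]; omega)
  · rw [← starProjection_top']
    exact starProjection_ne_of_finrank_ne (by rw [finrank_top]; omega)

theorem Orthonormal.starProjection_span_eq_sum_rankOne [Fintype ι] {v : ι → E}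
    (hv : Orthonormal 𝕜 v) [(span 𝕜 (Set.range v)).HasOrthogonalProjection] :
    (span 𝕜 (Set.range v)).starProjection = ∑ i, rankOne 𝕜 (v i) (v i) := by
  let b : OrthonormalBasis ι 𝕜 (span 𝕜 (Set.range v)) :=
    OrthonormalBasis.mk (orthonormal_span hv)
      ((span_range_subtype_eq_top_iff _ fun i => subset_span (Set.mem_range_self i)).mpr rfl).ge
  exact b.starProjection_eq_sum_rankOne.trans (by simp [b])

variable (𝕜) in
def pairVec (w : κ ⊕ κ → E) (a b : κ → ℝ) (j : κ) : E :=
  (a j : 𝕜) • w (.inl j) + (b j : 𝕜) • w (.inr j)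

section PairVec

variable {w : κ ⊕ κ → E} {a b : κ → ℝ}

theorem inner_pairVec_left [DecidableEq κ] (hw : Orthonormal 𝕜 w) (j : κ) (i : κ ⊕ κ) :
    ⟪pairVec 𝕜 w a b j, w i⟫_𝕜 =
      (if .inl j = i then (a j : 𝕜) else 0) + if .inr j = i then (b j : 𝕜) else 0 := by
  simp [pairVec, inner_add_left, inner_smul_left, orthonormal_iff_ite.mp hw]

theorem orthonormal_pairVec (hw : Orthonormal 𝕜 w) (hab : ∀ j, a j ^ 2 + b j ^ 2 = 1) :
    Orthonormal 𝕜 (pairVec 𝕜 w a b) := by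
  classical
  rw [orthonormal_iff_ite]
  intro j j'
  simp only [pairVec, inner_add_left, inner_add_right, inner_smul_left, inner_smul_right,
    orthonormal_iff_ite.mp hw, Sum.inl.injEq, Sum.inr.injEq, reduceCtorEq, if_false]
  split_ifs with h
  · subst h
    simp only [RCLike.conj_ofReal, mul_one, mul_zero, add_zero, zero_add]
    exact_mod_cast congrArg (fun x : ℝ => (x : 𝕜)) (by rw [← hab j]; ring)
  · simp

theorem rankOne_pairVec_add_rankOne_pairVec_neg {b' : κ → ℝ} (hb : ∀ j, b' j = -b j)
    (j : κ) :
    rankOne 𝕜 (pairVec 𝕜 w a b j) (pairVec 𝕜 w a b j) +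
        rankOne 𝕜 (pairVec 𝕜 w a b' j) (pairVec 𝕜 w a b' j) =
      ((2 * a j ^ 2 : ℝ) : 𝕜) • rankOne 𝕜 (w (.inl j)) (w (.inl j)) +
        ((2 * b j ^ 2 : ℝ) : 𝕜) • rankOne 𝕜 (w (.inr j)) (w (.inr j)) := by
  simp only [pairVec, hb, map_add, map_smul, map_smulₛₗ, add_apply, smul_apply,
    RCLike.conj_ofReal]
  push_cast
  module

variable [Fintype κ] [(span 𝕜 (Set.range (pairVec 𝕜 w a b))).HasOrthogonalProjection]
  (hw : Orthonormal 𝕜 w) (hab : ∀ j, a j ^ 2 + b j ^ 2 = 1)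
include hw hab

theorem starProjection_span_pairVec_apply_inl (j : κ) :
    (span 𝕜 (Set.range (pairVec 𝕜 w a b))).starProjection (w (.inl j)) =
      (a j : 𝕜) • pairVec 𝕜 w a b j := by
  classical
  rw [(orthonormal_pairVec hw hab).starProjection_span_eq_sum_rankOne]
  simp [inner_pairVec_left hw]

theorem starProjection_span_pairVec_apply_inr (j : κ) :
    (span 𝕜 (Set.range (pairVec 𝕜 w a b))).starProjection (w (.inr j)) =
      (b j : 𝕜) • pairVec 𝕜 w a b j := by
  classical
  rw [(orthonormal_pairVec hw hab).starProjection_span_eq_sum_rankOne]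
  simp [inner_pairVec_left hw]

theorem starProjection_span_pairVec_apply_of_forall_inner_eq_zero {x : E}
    (hx : ∀ i, ⟪w i, x⟫_𝕜 = 0) :
    (span 𝕜 (Set.range (pairVec 𝕜 w a b))).starProjection x = 0 := by
  rw [(orthonormal_pairVec hw hab).starProjection_span_eq_sum_rankOne]
  simp [pairVec, hx]

theorem inl_mem_iff_inr_mem_of_invariant {K : Submodule 𝕜 E}
    (hK : ∀ x ∈ K, (span 𝕜 (Set.range (pairVec 𝕜 w a b))).starProjection x ∈ K) {j : κ}
    (ha : a j ≠ 0) (hb : b j ≠ 0) : w (.inl j) ∈ K ↔ w (.inr j) ∈ K := by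
  have ha' : (a j : 𝕜) ≠ 0 := by exact_mod_cast ha
  have hb' : (b j : 𝕜) ≠ 0 := by exact_mod_cast hb
  constructor
  · intro h
    have hu : pairVec 𝕜 w a b j ∈ K := (K.smul_mem_iff ha').mp
      (starProjection_span_pairVec_apply_inl hw hab j ▸ hK _ h)
    refine (K.smul_mem_iff hb').mp ?_
    simpa [pairVec] using K.sub_mem hu (K.smul_mem (a j : 𝕜) h)
  · intro h
    have hu : pairVec 𝕜 w a b j ∈ K := (K.smul_mem_iff hb').mp
      (starProjection_span_pairVec_apply_inr hw hab j ▸ hK _ h)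
    refine (K.smul_mem_iff ha').mp ?_
    simpa [pairVec] using K.sub_mem hu (K.smul_mem (b j : 𝕜) h)

end PairVec

end General

namespace PosetA4

-- Casts `ℕ → Fin (2 * m + 1)` reduce modulo `2 * m + 1`; all indices used below are `≤ 2 * m`.
open Fin.NatCast

variable (m : ℕ)

noncomputable def blockCos (k : ℕ) : ℝ := √(1 - (2 * k + 1) / (4 * m))

noncomputable def blockSin (k : ℕ) : ℝ := √((2 * k + 1) / (4 * m))

def blockIdx (r : ℕ) : Fin m ⊕ Fin m → Fin (2 * m + 1) :=
  Sum.elim (fun j => (2 * j + r : ℕ)) (fun j => (2 * j + r + 1 : ℕ))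

noncomputable def blockVec (r : ℕ) (ε : ℝ) : Fin m → EuclideanSpace ℂ (Fin (2 * m + 1)) :=
  pairVec ℂ (EuclideanSpace.basisFun _ ℂ ∘ blockIdx m r)
    (fun j => blockCos m (2 * j + r)) (fun j => ε * blockSin m (2 * j + r))

noncomputable def blockSubspace (r : ℕ) (ε : ℝ) :
    Submodule ℂ (EuclideanSpace ℂ (Fin (2 * m + 1))) :=
  span ℂ (Set.range (blockVec m r ε))

noncomputable def intervalSubspace (s : ℕ) :
    Submodule ℂ (EuclideanSpace ℂ (Fin (2 * m + 1))) :=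
  span ℂ (Set.range fun k : Fin (2 * m) => EuclideanSpace.basisFun (Fin (2 * m + 1)) ℂ (k + s : ℕ))

noncomputable def subspaces : Fin 6 → Submodule ℂ (EuclideanSpace ℂ (Fin (2 * m + 1))) :=
  ![blockSubspace m 0 1, blockSubspace m 0 (-1), blockSubspace m 1 1, blockSubspace m 1 (-1),
    intervalSubspace m 0, intervalSubspace m 1]

noncomputable def character : Fin 6 → ℝ :=
  ![1 / 2, 1 / 2, 1 / 2, 1 / 2, 1 / (4 * m), 1 / (4 * m)]

noncomputable def coordProj (k : ℕ) :
    EuclideanSpace ℂ (Fin (2 * m + 1)) →L[ℂ] EuclideanSpace ℂ (Fin (2 * m + 1)) :=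
  rankOne ℂ (EuclideanSpace.basisFun (Fin (2 * m + 1)) ℂ k)
    (EuclideanSpace.basisFun (Fin (2 * m + 1)) ℂ k)

noncomputable def blockDiag (k : ℕ) :
    EuclideanSpace ℂ (Fin (2 * m + 1)) →L[ℂ] EuclideanSpace ℂ (Fin (2 * m + 1)) :=
  ((blockCos m k ^ 2 : ℝ) : ℂ) • coordProj m k +
    ((blockSin m k ^ 2 : ℝ) : ℂ) • coordProj m (k + 1)

/-- `2m` times the eigenvalue of `P₁ + P₂` at `e_k`; the three cases are `≡ 3, 1, 0 mod 4`. -/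
def eigenNum (k : ℕ) : ℕ :=
  if k = 2 * m then 0 else if Even k then 4 * m - 2 * k - 1 else 2 * k - 1

variable {m}

section Coefficients

variable {k : ℕ}

theorem two_mul_add_one_div_lt_one (hk : k < 2 * m) : (2 * k + 1 : ℝ) / (4 * m) < 1 := by
  have hm : (0 : ℝ) < 4 * m := by
    have : 0 < m := by omega
    positivity
  exact (div_lt_one hm).mpr (by exact_mod_cast (by omega : 2 * k + 1 < 4 * m))

theorem blockSin_sq (k : ℕ) : blockSin m k ^ 2 = (2 * k + 1) / (4 * m) :=
  Real.sq_sqrt (by positivity)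

theorem blockCos_sq (hk : k < 2 * m) : blockCos m k ^ 2 = 1 - (2 * k + 1) / (4 * m) :=
  Real.sq_sqrt (sub_nonneg.mpr (two_mul_add_one_div_lt_one hk).le)

theorem blockCos_pos (hk : k < 2 * m) : 0 < blockCos m k :=
  Real.sqrt_pos.mpr (sub_pos.mpr (two_mul_add_one_div_lt_one hk))

theorem blockSin_pos (hk : k < 2 * m) : 0 < blockSin m k := by
  have : 0 < m := by omega
  exact Real.sqrt_pos.mpr (by positivity)

end Coefficients

variable {r : ℕ}

theorem val_blockIdx_inl (hr : r ≤ 1) (j : Fin m) : (blockIdx m r (.inl j) : ℕ) = 2 * j + r :=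
  Fin.val_cast_of_lt (by omega)

theorem val_blockIdx_inr (hr : r ≤ 1) (j : Fin m) :
    (blockIdx m r (.inr j) : ℕ) = 2 * j + r + 1 :=
  Fin.val_cast_of_lt (by omega)

theorem injective_blockIdx (hr : r ≤ 1) : Injective (blockIdx m r) := by
  intro i i' h
  have := congrArg Fin.val h
  rcases i with j | j <;> rcases i' with j' | j' <;>
    simp only [val_blockIdx_inl hr, val_blockIdx_inr hr] at this <;> grind

theorem orthonormal_basisFun_comp_blockIdx (hr : r ≤ 1) :
    Orthonormal ℂ (EuclideanSpace.basisFun (Fin (2 * m + 1)) ℂ ∘ blockIdx m r) :=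
  (EuclideanSpace.basisFun _ ℂ).orthonormal.comp _ (injective_blockIdx hr)

theorem blockCoeffs_sq_add_sq (hr : r ≤ 1) {ε : ℝ} (hε : ε ^ 2 = 1) (j : Fin m) :
    blockCos m (2 * j + r) ^ 2 + (ε * blockSin m (2 * j + r)) ^ 2 = 1 := by
  rw [mul_pow, hε, one_mul, blockCos_sq (by omega), blockSin_sq]
  ring

theorem orthonormal_blockVec (hr : r ≤ 1) {ε : ℝ} (hε : ε ^ 2 = 1) :
    Orthonormal ℂ (blockVec m r ε) :=
  orthonormal_pairVec (orthonormal_basisFun_comp_blockIdx hr) (blockCoeffs_sq_add_sq hr hε)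

theorem orthonormal_intervalVec {s : ℕ} (hs : s ≤ 1) :
    Orthonormal ℂ fun k : Fin (2 * m) => EuclideanSpace.basisFun (Fin (2 * m + 1)) ℂ
      (k + s : ℕ) := by
  refine (EuclideanSpace.basisFun _ ℂ).orthonormal.comp _ fun k k' h => Fin.ext ?_
  have := congrArg Fin.val h
  rwa [Fin.val_cast_of_lt (by omega), Fin.val_cast_of_lt (by omega),
    Nat.add_right_cancel_iff] at this

theorem finrank_blockSubspace (hr : r ≤ 1) {ε : ℝ} (hε : ε ^ 2 = 1) :
    Module.finrank ℂ (blockSubspace m r ε) = m := by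
  rw [blockSubspace, finrank_span_eq_card (orthonormal_blockVec hr hε).linearIndependent,
    Fintype.card_fin]

theorem finrank_intervalSubspace {s : ℕ} (hs : s ≤ 1) :
    Module.finrank ℂ (intervalSubspace m s) = 2 * m := by
  rw [intervalSubspace, finrank_span_eq_card (orthonormal_intervalVec hs).linearIndependent,
    Fintype.card_fin]

theorem basisFun_mem_intervalSubspace {s k : ℕ} (hk : k < 2 * m) :
    EuclideanSpace.basisFun (Fin (2 * m + 1)) ℂ (k + s : ℕ) ∈ intervalSubspace m s :=
  subset_span ⟨⟨k, hk⟩, rfl⟩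

theorem blockSubspace_le_intervalSubspace (r : ℕ) (ε : ℝ) :
    blockSubspace m r ε ≤ intervalSubspace m r := by
  refine span_le.mpr ?_
  rintro _ ⟨j, rfl⟩
  have h₁ := basisFun_mem_intervalSubspace (m := m) (s := r) (k := 2 * j) (by omega)
  have h₂ := basisFun_mem_intervalSubspace (m := m) (s := r) (k := 2 * j + 1) (by omega)
  rw [show 2 * (j : ℕ) + 1 + r = 2 * j + r + 1 by ring] at h₂
  exact add_mem (smul_mem _ _ h₁) (smul_mem _ _ h₂)

theorem starProjection_blockSubspace_add_neg (hr : r ≤ 1) :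
    (blockSubspace m r 1).starProjection + (blockSubspace m r (-1)).starProjection =
      (2 : ℂ) • ∑ j ∈ range m, blockDiag m (2 * j + r) := by
  rw [blockSubspace, blockSubspace,
    (orthonormal_blockVec hr (by norm_num)).starProjection_span_eq_sum_rankOne,
    (orthonormal_blockVec hr (by norm_num)).starProjection_span_eq_sum_rankOne,
    ← sum_add_distrib, ← Fin.sum_univ_eq_sum_range (fun j => blockDiag m (2 * j + r)), smul_sum]
  refine sum_congr rfl fun j _ => ?_
  rw [blockVec, blockVec, rankOne_pairVec_add_rankOne_pairVec_neg (fun j => by ring)]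
  simp only [blockDiag, coordProj, comp_apply, blockIdx, Sum.elim_inl, Sum.elim_inr]
  push_cast
  module

theorem starProjection_intervalSubspace {s : ℕ} (hs : s ≤ 1) :
    (intervalSubspace m s).starProjection = ∑ k ∈ range (2 * m), coordProj m (k + s) := by
  rw [intervalSubspace, (orthonormal_intervalVec hs).starProjection_span_eq_sum_rankOne,
    ← Fin.sum_univ_eq_sum_range (fun k => coordProj m (k + s))]
  rfl

theorem sum_coordProj : ∑ k ∈ range (2 * m + 1), coordProj m k = 1 := by
  rw [← Fin.sum_univ_eq_sum_range (coordProj m)]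
  simp only [coordProj, Fin.cast_val_eq_self]
  exact (EuclideanSpace.basisFun (Fin (2 * m + 1)) ℂ).sum_rankOne_eq_id

theorem sum_character_smul_starProjection (hm : 1 ≤ m) :
    ∑ i, (character m i : ℂ) • (subspaces m i).starProjection = 1 := by
  have hm' : (m : ℂ) ≠ 0 := Nat.cast_ne_zero.mpr (by omega)
  let t : ℕ → ℂ := fun k => k / (2 * m)
  calc ∑ i, (character m i : ℂ) • (subspaces m i).starProjection
      = (1 / 2 : ℂ) •
            ((blockSubspace m 0 1).starProjection + (blockSubspace m 0 (-1)).starProjection) +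
          (1 / 2 : ℂ) •
            ((blockSubspace m 1 1).starProjection + (blockSubspace m 1 (-1)).starProjection) +
          (1 / (4 * m) : ℂ) •
            ((intervalSubspace m 0).starProjection + (intervalSubspace m 1).starProjection) := by
        simp [Fin.sum_univ_six, character, subspaces]
        module
    _ = ∑ k ∈ range (2 * m),
          (blockDiag m k + (1 / (4 * m) : ℂ) • (coordProj m k + coordProj m (k + 1))) := by
        rw [starProjection_blockSubspace_add_neg (by norm_num),
          starProjection_blockSubspace_add_neg le_rfl,
          starProjection_intervalSubspace (by norm_num), starProjection_intervalSubspace le_rfl]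
        conv_rhs => rw [sum_add_distrib, ← smul_sum, sum_add_distrib,
          sum_range_two_mul (blockDiag m), sum_add_distrib]
        simp only [add_zero]
        module
    _ = ∑ k ∈ range (2 * m),
          ((1 - t k) • coordProj m k + t (k + 1) • coordProj m (k + 1)) := by
        refine sum_congr rfl fun k hk => ?_
        simp only [blockDiag, blockCos_sq (mem_range.mp hk), blockSin_sq, t]
        push_cast
        module
    _ = 1 := by
        rw [sum_range_one_sub_smul_add_smul_succ (coordProj m) t (2 * m) (by simp [t])
          (by simp [t, hm']), sum_coordProj]

section Irreducible

theorem starProjection_blockSubspace_apply_inl (hr : r ≤ 1) {ε : ℝ} (hε : ε ^ 2 = 1)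
    (j : Fin m) :
    (blockSubspace m r ε).starProjection (EuclideanSpace.basisFun _ ℂ (blockIdx m r (.inl j))) =
      (blockCos m (2 * j + r) : ℂ) • blockVec m r ε j :=
  starProjection_span_pairVec_apply_inl (orthonormal_basisFun_comp_blockIdx hr)
    (blockCoeffs_sq_add_sq hr hε) j

theorem starProjection_blockSubspace_apply_inr (hr : r ≤ 1) {ε : ℝ} (hε : ε ^ 2 = 1)
    (j : Fin m) :
    (blockSubspace m r ε).starProjection (EuclideanSpace.basisFun _ ℂ (blockIdx m r (.inr j))) =
      ((ε * blockSin m (2 * j + r) : ℝ) : ℂ) • blockVec m r ε j :=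
  starProjection_span_pairVec_apply_inr (orthonormal_basisFun_comp_blockIdx hr)
    (blockCoeffs_sq_add_sq hr hε) j

theorem starProjection_blockSubspace_zero_apply_last {ε : ℝ} (hε : ε ^ 2 = 1) :
    (blockSubspace m 0 ε).starProjection (EuclideanSpace.basisFun (Fin (2 * m + 1)) ℂ (2 * m : ℕ)) =
      0 := by
  refine starProjection_span_pairVec_apply_of_forall_inner_eq_zero
    (orthonormal_basisFun_comp_blockIdx (by norm_num)) (blockCoeffs_sq_add_sq (by norm_num) hε)
    fun i => ?_
  rw [comp_apply, orthonormal_iff_ite.mp (EuclideanSpace.basisFun _ ℂ).orthonormal, if_neg]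
  intro h
  have := congrArg Fin.val h
  rw [Fin.val_cast_of_lt (by omega)] at this
  rcases i with j | j
  · rw [val_blockIdx_inl (by norm_num)] at this; omega
  · rw [val_blockIdx_inr (by norm_num)] at this; omega

theorem starProjection_blockSubspace_add_neg_apply_inl (hr : r ≤ 1) (j : Fin m) :
    ((blockSubspace m r 1).starProjection + (blockSubspace m r (-1)).starProjection)
        (EuclideanSpace.basisFun _ ℂ (blockIdx m r (.inl j))) =
      ((2 * blockCos m (2 * j + r) ^ 2 : ℝ) : ℂ) •
        EuclideanSpace.basisFun _ ℂ (blockIdx m r (.inl j)) := by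
  rw [add_apply, starProjection_blockSubspace_apply_inl hr (by norm_num),
    starProjection_blockSubspace_apply_inl hr (by norm_num)]
  simp only [blockVec, pairVec, comp_apply]
  push_cast
  module

theorem starProjection_blockSubspace_add_neg_apply_inr (hr : r ≤ 1) (j : Fin m) :
    ((blockSubspace m r 1).starProjection + (blockSubspace m r (-1)).starProjection)
        (EuclideanSpace.basisFun _ ℂ (blockIdx m r (.inr j))) =
      ((2 * blockSin m (2 * j + r) ^ 2 : ℝ) : ℂ) •
        EuclideanSpace.basisFun _ ℂ (blockIdx m r (.inr j)) := by
  rw [add_apply, starProjection_blockSubspace_apply_inr hr (by norm_num),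
    starProjection_blockSubspace_apply_inr hr (by norm_num)]
  simp only [blockVec, pairVec, comp_apply]
  push_cast
  module

theorem starProjection_blockSubspace_zero_add_neg_apply (i : Fin (2 * m + 1)) :
    ((blockSubspace m 0 1).starProjection + (blockSubspace m 0 (-1)).starProjection)
        (EuclideanSpace.basisFun _ ℂ i) =
      ((eigenNum m i : ℂ) / (2 * m)) • EuclideanSpace.basisFun _ ℂ i := by
  obtain ⟨j, hj | hj⟩ := Nat.even_or_odd' (i : ℕ)
  · by_cases hjm : j = m
    · have hi : i = ((2 * m : ℕ) : Fin (2 * m + 1)) :=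
        Fin.ext (by rw [Fin.val_cast_of_lt (by omega)]; omega)
      rw [add_apply, hi, starProjection_blockSubspace_zero_apply_last (by norm_num),
        starProjection_blockSubspace_zero_apply_last (by norm_num), Fin.val_cast_of_lt (by omega),
        eigenNum, if_pos rfl]
      simp
    · have hi : i = blockIdx m 0 (.inl ⟨j, by omega⟩) :=
        Fin.ext (by rw [val_blockIdx_inl (by norm_num)]; omega)
      have hm : (m : ℂ) ≠ 0 := Nat.cast_ne_zero.mpr (by omega)
      rw [hi, starProjection_blockSubspace_add_neg_apply_inl (by norm_num),
        val_blockIdx_inl (by norm_num), blockCos_sq (by simp; omega), eigenNum, if_neg (by omega),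
        if_pos (by simp), Nat.cast_sub (by omega), Nat.cast_sub (by omega)]
      congr 1
      push_cast
      field_simp
      ring
  · have hi : i = blockIdx m 0 (.inr ⟨j, by omega⟩) :=
      Fin.ext (by rw [val_blockIdx_inr (by norm_num)]; omega)
    have hm : (m : ℂ) ≠ 0 := Nat.cast_ne_zero.mpr (by omega)
    rw [hi, starProjection_blockSubspace_add_neg_apply_inr (by norm_num),
      val_blockIdx_inr (by norm_num), blockSin_sq, eigenNum, if_neg (by omega),
      if_neg (by simp), Nat.cast_sub (by omega)]
    congr 1
    push_cast
    field_simp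
    ring

theorem injective_eigenNum : Injective fun i : Fin (2 * m + 1) => eigenNum m i := by
  intro i i' h
  simp only [eigenNum, Nat.even_iff] at h
  have := i.isLt
  have := i'.isLt
  ext
  split_ifs at h <;> omega

variable {K : Submodule ℂ (EuclideanSpace ℂ (Fin (2 * m + 1)))}

theorem exists_basisFun_mem (hm : 1 ≤ m)
    (hK : ∀ x ∈ K,
      ((blockSubspace m 0 1).starProjection + (blockSubspace m 0 (-1)).starProjection) x ∈ K)
    (hK₀ : K ≠ ⊥) : ∃ i, EuclideanSpace.basisFun _ ℂ i ∈ K := by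
  set v := EuclideanSpace.basisFun (Fin (2 * m + 1)) ℂ
  obtain ⟨x, hx, hx₀⟩ := (Submodule.ne_bot_iff K).mp hK₀
  obtain ⟨i, hi⟩ : ∃ i, v.repr x i ≠ 0 := by
    by_contra! hc
    exact hx₀ (v.repr.map_eq_zero_iff.mp (by ext i; simp [hc]))
  have h2m : (2 * m : ℂ) ≠ 0 := by norm_cast; omega
  have hd : Injective fun i : Fin (2 * m + 1) => (eigenNum m i : ℂ) / (2 * m) :=
    fun i i' h => injective_eigenNum (Nat.cast_injective ((div_left_inj' h2m).mp h))
  have := smul_mem_of_sum_smul_mem_of_eigenvectors (T := (_ : _ →L[ℂ] _).toLinearMap) hK hd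
    starProjection_blockSubspace_zero_add_neg_apply univ (v.repr x) (by rwa [v.sum_repr]) i
    (mem_univ i)
  exact ⟨i, (K.smul_mem_iff hi).mp this⟩

theorem basisFun_mem_iff_succ_mem (hK : ∀ i, ∀ x ∈ K, (subspaces m i).starProjection x ∈ K)
    {k : ℕ} (hk : k < 2 * m) :
    EuclideanSpace.basisFun (Fin (2 * m + 1)) ℂ k ∈ K ↔
      EuclideanSpace.basisFun (Fin (2 * m + 1)) ℂ (k + 1 : ℕ) ∈ K := by
  obtain ⟨j, rfl | rfl⟩ := Nat.even_or_odd' k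
  · exact inl_mem_iff_inr_mem_of_invariant (orthonormal_basisFun_comp_blockIdx (by norm_num))
      (blockCoeffs_sq_add_sq (by norm_num) (one_pow 2)) (hK 0) (j := ⟨j, by omega⟩)
      (blockCos_pos (by omega)).ne' (by simpa using (blockSin_pos (by omega)).ne')
  · exact inl_mem_iff_inr_mem_of_invariant (orthonormal_basisFun_comp_blockIdx le_rfl)
      (blockCoeffs_sq_add_sq le_rfl (one_pow 2)) (hK 2) (j := ⟨j, by omega⟩)
      (blockCos_pos (by omega)).ne' (by simpa using (blockSin_pos (by omega)).ne')

theorem eq_bot_or_eq_top_of_invariant (hm : 1 ≤ m)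
    (hK : ∀ i, ∀ x ∈ K, (subspaces m i).starProjection x ∈ K) : K = ⊥ ∨ K = ⊤ := by
  refine or_iff_not_imp_left.mpr fun hK₀ => ?_
  set v := EuclideanSpace.basisFun (Fin (2 * m + 1)) ℂ
  obtain ⟨i, hi⟩ := exists_basisFun_mem hm (fun x hx => add_mem (hK 0 x hx) (hK 1 x hx)) hK₀
  have hzero : ∀ k ≤ 2 * m, v k ∈ K ↔ v (0 : ℕ) ∈ K := by
    intro k hk
    induction k with
    | zero => rfl
    | succ k ih => exact (basisFun_mem_iff_succ_mem hK (by omega)).symm.trans (ih (by omega))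
  have hall (i' : Fin (2 * m + 1)) : v i' ∈ K := by
    have := (hzero i' (by omega)).mpr ((hzero i (by omega)).mp (by rwa [Fin.cast_val_eq_self]))
    rwa [Fin.cast_val_eq_self] at this
  rw [eq_top_iff, ← v.toBasis.span_eq, span_le]
  rintro _ ⟨i', rfl⟩
  simpa using hall i'

end Irreducible

theorem character_pos_lt_one (hm : 1 ≤ m) (i : Fin 6) :
    0 < character m i ∧ character m i < 1 := by
  have hm' : (1 : ℝ) ≤ m := by exact_mod_cast hm
  have h₂ : (0 : ℝ) < 1 / 2 ∧ (1 : ℝ) / 2 < 1 := by norm_num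
  have h₄ : (0 : ℝ) < 1 / (4 * m) ∧ 1 / (4 * m : ℝ) < 1 :=
    ⟨by positivity, by rw [div_lt_one (by positivity)]; linarith⟩
  fin_cases i <;> first | exact h₂ | exact h₄

theorem starProjection_subspaces_ne_zero_and_ne_one (hm : 1 ≤ m) (i : Fin 6) :
    (subspaces m i).starProjection ≠ 0 ∧ (subspaces m i).starProjection ≠ 1 := by
  have hblock (r : ℕ) (hr : r ≤ 1) (ε : ℝ) (hε : ε ^ 2 = 1) :=
    starProjection_ne_zero_and_ne_one (U := blockSubspace m r ε)
      (by rw [finrank_blockSubspace hr hε]; omega)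
      (by rw [finrank_blockSubspace hr hε, finrank_euclideanSpace_fin]; omega)
  have hinterval (s : ℕ) (hs : s ≤ 1) :=
    starProjection_ne_zero_and_ne_one (U := intervalSubspace m s)
      (by rw [finrank_intervalSubspace hs]; omega)
      (by rw [finrank_intervalSubspace hs, finrank_euclideanSpace_fin]; omega)
  fin_cases i
  exacts [hblock 0 zero_le_one 1 (one_pow 2), hblock 0 zero_le_one (-1) (by norm_num),
    hblock 1 le_rfl 1 (one_pow 2), hblock 1 le_rfl (-1) (by norm_num),
    hinterval 0 zero_le_one, hinterval 1 le_rfl]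

theorem starProjection_blockSubspace_ne_intervalSubspace (hm : 1 ≤ m) (hr : r ≤ 1) {ε : ℝ}
    (hε : ε ^ 2 = 1) {s : ℕ} (hs : s ≤ 1) :
    (blockSubspace m r ε).starProjection ≠ (intervalSubspace m s).starProjection :=
  starProjection_ne_of_finrank_ne
    (by rw [finrank_blockSubspace hr hε, finrank_intervalSubspace hs]; omega)

end PosetA4

/-- For every `m ≥ 1` the poset `a₄` (elements `g₁, …, g₆` with
`g₁ < g₅`, `g₂ < g₅`, `g₃ < g₆`, `g₄ < g₆`) admits an essential irreducible
orthoscalar representation, with some character taking values in `(0,1)`, on a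
complex Hilbert space of dimension `2m + 1`.
(Indices: `P 0, …, P 5` stand for `P₁, …, P₆`.) -/
theorem stmt_17 (m : ℕ) (hm : 1 ≤ m) :
    ∃ α : Fin 6 → ℝ, (∀ i, 0 < α i ∧ α i < 1) ∧
    Module.finrank ℂ (EuclideanSpace ℂ (Fin (2 * m + 1))) = 2 * m + 1 ∧
    ∃ P : Fin 6 → EuclideanSpace ℂ (Fin (2 * m + 1)) →L[ℂ] EuclideanSpace ℂ (Fin (2 * m + 1)),
      (∀ i, IsSelfAdjoint (P i) ∧ P i ∘L P i = P i) ∧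
      P 0 ∘L P 4 = P 0 ∧ P 1 ∘L P 4 = P 1 ∧ P 2 ∘L P 5 = P 2 ∧ P 3 ∘L P 5 = P 3 ∧
      (∑ i, (α i : ℂ) • P i = 1) ∧
      (∀ K : Submodule ℂ (EuclideanSpace ℂ (Fin (2 * m + 1))),
        IsClosed (K : Set (EuclideanSpace ℂ (Fin (2 * m + 1)))) →
        (∀ i, ∀ x ∈ K, P i x ∈ K) → K = ⊥ ∨ K = ⊤) ∧
      (∀ i, P i ≠ 0 ∧ P i ≠ 1) ∧
      P 0 ≠ P 4 ∧ P 1 ≠ P 4 ∧ P 2 ≠ P 5 ∧ P 3 ≠ P 5 := by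
  open PosetA4 in
  exact ⟨character m, character_pos_lt_one hm, finrank_euclideanSpace_fin,
    fun i => (subspaces m i).starProjection,
    fun i => ⟨isSelfAdjoint_starProjection _, (subspaces m i).isIdempotentElem_starProjection⟩,
    starProjection_comp_starProjection_of_le (blockSubspace_le_intervalSubspace 0 1),
    starProjection_comp_starProjection_of_le (blockSubspace_le_intervalSubspace 0 (-1)),
    starProjection_comp_starProjection_of_le (blockSubspace_le_intervalSubspace 1 1),
    starProjection_comp_starProjection_of_le (blockSubspace_le_intervalSubspace 1 (-1)),
    sum_character_smul_starProjection hm,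
    fun K _ hK => eq_bot_or_eq_top_of_invariant hm hK,
    starProjection_subspaces_ne_zero_and_ne_one hm,
    starProjection_blockSubspace_ne_intervalSubspace hm zero_le_one (one_pow 2) zero_le_one,
    starProjection_blockSubspace_ne_intervalSubspace hm zero_le_one (by norm_num) zero_le_one,
    starProjection_blockSubspace_ne_intervalSubspace hm le_rfl (one_pow 2) le_rfl,
    starProjection_blockSubspace_ne_intervalSubspace hm le_rfl (by norm_num) le_rfl⟩
end
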